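/- arXiv:2411.14312 — 6 statements merged into one kernel-verified Lean document; each statement's English description precedes it below -/
import Mathlib

section
/- Let T : [0,1) → [0,1) be an interval translation map with r = 2 branches: T(x) = x + γ₁ on [0,β) and T(x) = x + γ₂ on [β,1), with γ₁ ≥ 0 ≥ γ₂ (so that T maps into [0,1)). Then T is of finite type, i.e., there exists n with T^{n+1}([0,1)) = Tⁿ([0,1)). -/
/-!
If `γ₁ ≠ 0 ≠ γ₂`, then on `[c, d) = [β + γ₂, β + γ₁)` the map `T` exchanges the pieces
`[c, β)` and `[β, d)`, so it maps `[c, d)` onto itself. A point left of `c` moves right by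
`γ₁` at every step until it enters `[c, d)`, and a point right of `d` moves left by `-γ₂`; since
`[0, 1)` has length one, after `N > max (1 / γ₁) (1 / -γ₂)` steps every orbit is in `[c, d)`.
Hence `Tᴺ [0, 1) = [c, d) = Tᴺ⁺¹ [0, 1)`.
-/

open Set Filter Function

theorem iterate_succ_image_eq_of_image_eq {α : Type*} {f : α → α} {s J : Set α} {N : ℕ}
    (hs : MapsTo f s s) (hJs : J ⊆ s) (hJ : f '' J = J) (hN : f^[N] '' s ⊆ J) :
    f^[N + 1] '' s = f^[N] '' s := by
  refine subset_antisymm ?_ ?_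
  · rw [iterate_succ, image_comp]
    exact image_mono hs.image_subset
  · calc f^[N] '' s ⊆ J := hN
      _ = f^[N + 1] '' J := by rw [image_iterate_eq, iterate_fixed hJ]
      _ ⊆ f^[N + 1] '' s := image_mono hJs

theorem eventually_mapsTo_iterate_of_potential {α : Type*} {f : α → α} {A J : Set α}
    (φ : α → ℝ) {a b δ : ℝ} (hδ : 0 < δ) (hJ : MapsTo f J J) (hA : MapsTo f A (A ∪ J))
    (hφ : ∀ x ∈ A, φ x + δ ≤ φ (f x)) (hφA : MapsTo φ A (Icc a b)) :
    ∀ᶠ n in atTop, MapsTo f^[n] A J := by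
  have orbit : ∀ n : ℕ, ∀ x ∈ A, f^[n] x ∈ J ∨ f^[n] x ∈ A ∧ φ x + n * δ ≤ φ (f^[n] x) := by
    intro n
    induction n with
    | zero => intro x hx; simpa using Or.inr hx
    | succ n ih =>
      intro x hx
      rw [iterate_succ_apply']
      rcases ih x hx with hxJ | ⟨hxA, hφx⟩
      · exact Or.inl (hJ hxJ)
      · rcases hA hxA with hA' | hJ'
        · refine Or.inr ⟨hA', ?_⟩
          push_cast
          linarith [hφ _ hxA]
        · exact Or.inl hJ'
  obtain ⟨N, hN⟩ := exists_nat_gt ((b - a) / δ)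
  filter_upwards [eventually_ge_atTop N] with n hn x hx
  refine (orbit n x hx).resolve_right fun ⟨hxA, hφx⟩ => ?_
  have hroom : b - a < n * δ :=
    (div_lt_iff₀ hδ).mp (hN.trans_le (Nat.cast_le.mpr hn))
  linarith [(hφA hx).1, (hφA hxA).2]

theorem add_le_of_forall_mem_Ico_add_lt {a b γ r : ℝ} (hab : a < b)
    (h : ∀ x ∈ Ico a b, x + γ < r) : b + γ ≤ r := by
  by_contra! hlt
  have hx := h (max a (r - γ)) ⟨le_max_left _ _, max_lt hab (by linarith)⟩
  linarith [le_max_right a (r - γ)]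

section TwoIntervals

variable {β γ₁ γ₂ : ℝ} {T : ℝ → ℝ}

theorem translations_mem_Icc_of_mapsTo (hβ : β ∈ Ioo 0 1)
    (hT1 : ∀ x ∈ Ico 0 β, T x = x + γ₁) (hT2 : ∀ x ∈ Ico β 1, T x = x + γ₂)
    (hmaps : MapsTo T (Ico 0 1) (Ico 0 1)) :
    γ₁ ∈ Icc 0 (1 - β) ∧ γ₂ ∈ Icc (-β) 0 := by
  obtain ⟨hβ0, hβ1⟩ := hβ
  have hleft : ∀ x ∈ Ico 0 β, x + γ₁ ∈ Ico (0 : ℝ) 1 := fun x hx =>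
    hT1 x hx ▸ hmaps ⟨hx.1, hx.2.trans hβ1⟩
  have hright : ∀ x ∈ Ico β 1, x + γ₂ ∈ Ico (0 : ℝ) 1 := fun x hx =>
    hT2 x hx ▸ hmaps ⟨hβ0.le.trans hx.1, hx.2⟩
  have h0 := (hleft 0 ⟨le_rfl, hβ0⟩).1
  have hβ := (hright β ⟨le_rfl, hβ1⟩).1
  have hβγ₁ := add_le_of_forall_mem_Ico_add_lt hβ0 fun x hx => (hleft x hx).2
  have hγ₂ := add_le_of_forall_mem_Ico_add_lt hβ1 fun x hx => (hright x hx).2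
  exact ⟨⟨by linarith, by linarith⟩, ⟨by linarith, by linarith⟩⟩

/-- `[attractorLeft, attractorRight)` is the attractor `⋂ Tⁿ [0, 1)`. If `γ₁ = 0` the points of
`[0, β)` are fixed, so it starts at `0`; symmetrically it ends at `1` if `γ₂ = 0`. -/
noncomputable def attractorLeft (β γ₁ γ₂ : ℝ) : ℝ := if γ₁ = 0 then 0 else β + γ₂

noncomputable def attractorRight (β γ₁ γ₂ : ℝ) : ℝ := if γ₂ = 0 then 1 else β + γ₁

theorem attractorLeft_mem_Icc (hγ₂ : γ₂ ∈ Icc (-β) 0) :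
    attractorLeft β γ₁ γ₂ ∈ Icc 0 (β + γ₂) := by
  unfold attractorLeft
  split_ifs <;> constructor <;> linarith [hγ₂.1]

theorem attractorRight_mem_Icc (hγ₁ : γ₁ ∈ Icc 0 (1 - β)) :
    attractorRight β γ₁ γ₂ ∈ Icc (β + γ₁) 1 := by
  unfold attractorRight
  split_ifs <;> constructor <;> linarith [hγ₁.2]

theorem Ico_attractor_subset_union :
    Ico (attractorLeft β γ₁ γ₂) (attractorRight β γ₁ γ₂) ⊆
      Ico (attractorLeft β γ₁ γ₂ + γ₁) (β + γ₁) ∪ Ico (β + γ₂) (attractorRight β γ₁ γ₂ + γ₂) := by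
  intro y ⟨hcy, hyd⟩
  simp only [mem_union, mem_Ico]
  unfold attractorLeft attractorRight at *
  rcases lt_or_ge y (β + γ₁ + γ₂) with hy | hy <;> split_ifs at * <;> first
    | exact Or.inl ⟨by linarith, by linarith⟩ | exact Or.inr ⟨by linarith, by linarith⟩

theorem image_Ico_attractor (hγ₁ : γ₁ ∈ Icc 0 (1 - β)) (hγ₂ : γ₂ ∈ Icc (-β) 0)
    (hT1 : ∀ x ∈ Ico 0 β, T x = x + γ₁) (hT2 : ∀ x ∈ Ico β 1, T x = x + γ₂) :
    T '' Ico (attractorLeft β γ₁ γ₂) (attractorRight β γ₁ γ₂) =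
      Ico (attractorLeft β γ₁ γ₂) (attractorRight β γ₁ γ₂) := by
  obtain ⟨hc0, hcβ⟩ := attractorLeft_mem_Icc (γ₁ := γ₁) hγ₂
  obtain ⟨hβd, hd1⟩ := attractorRight_mem_Icc (γ₂ := γ₂) hγ₁
  set c := attractorLeft β γ₁ γ₂
  set d := attractorRight β γ₁ γ₂
  have hleft : T '' Ico c β = Ico (c + γ₁) (β + γ₁) := by
    rw [← image_add_const_Ico]
    exact EqOn.image_eq fun x hx => hT1 x ⟨hc0.trans hx.1, hx.2⟩
  have hright : T '' Ico β d = Ico (β + γ₂) (d + γ₂) := by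
    rw [← image_add_const_Ico]
    exact EqOn.image_eq fun x hx => hT2 x ⟨hx.1, hx.2.trans_le hd1⟩
  have hsplit : Ico c d = Ico c β ∪ Ico β d :=
    (Ico_union_Ico_eq_Ico (by linarith [hγ₂.2]) (by linarith [hγ₁.1])).symm
  refine subset_antisymm ?_ ?_
  · rw [hsplit, image_union, hleft, hright, ← hsplit]
    exact union_subset (Ico_subset_Ico (by linarith [hγ₁.1]) hβd)
      (Ico_subset_Ico hcβ (by linarith [hγ₂.2]))
  · rw [hsplit, image_union, hleft, hright, ← hsplit]
    exact Ico_attractor_subset_union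

theorem eventually_mapsTo_iterate_Ico_zero_attractorLeft (hγ₁ : γ₁ ∈ Icc 0 (1 - β))
    (hγ₂ : γ₂ ∈ Icc (-β) 0) (hT1 : ∀ x ∈ Ico 0 β, T x = x + γ₁)
    (hT2 : ∀ x ∈ Ico β 1, T x = x + γ₂) :
    ∀ᶠ n in atTop, MapsTo T^[n] (Ico 0 (attractorLeft β γ₁ γ₂))
      (Ico (attractorLeft β γ₁ γ₂) (attractorRight β γ₁ γ₂)) := by
  rcases hγ₁.1.eq_or_lt with rfl | hγ₁0
  · simp [attractorLeft, mapsTo_empty]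
  obtain ⟨hc0, hcβ⟩ := attractorLeft_mem_Icc (γ₁ := γ₁) hγ₂
  obtain ⟨hβd, hd1⟩ := attractorRight_mem_Icc (γ₂ := γ₂) hγ₁
  set c := attractorLeft β γ₁ γ₂
  set d := attractorRight β γ₁ γ₂
  have hT : ∀ x ∈ Ico 0 c, T x = x + γ₁ := fun x hx =>
    hT1 x ⟨hx.1, hx.2.trans_le (by linarith [hγ₂.2])⟩
  refine eventually_mapsTo_iterate_of_potential id hγ₁0
    (mapsTo_iff_image_subset.mpr (image_Ico_attractor hγ₁ hγ₂ hT1 hT2).subset)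
    (fun x hx => ?_) (fun x hx => (hT x hx).ge) (a := 0) (b := 1) fun x hx => ?_
  · rw [Ico_union_Ico_eq_Ico hc0 (by linarith [hγ₁.1, hγ₂.2]), hT x hx]
    exact ⟨by linarith [hx.1], by linarith [hx.2, hγ₂.2]⟩
  · exact ⟨hx.1, (hx.2.trans_le (by linarith [hγ₂.2])).le⟩

theorem eventually_mapsTo_iterate_Ico_attractorRight_one (hγ₁ : γ₁ ∈ Icc 0 (1 - β))
    (hγ₂ : γ₂ ∈ Icc (-β) 0) (hT1 : ∀ x ∈ Ico 0 β, T x = x + γ₁)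
    (hT2 : ∀ x ∈ Ico β 1, T x = x + γ₂) :
    ∀ᶠ n in atTop, MapsTo T^[n] (Ico (attractorRight β γ₁ γ₂) 1)
      (Ico (attractorLeft β γ₁ γ₂) (attractorRight β γ₁ γ₂)) := by
  rcases hγ₂.2.eq_or_lt with rfl | hγ₂0
  · simp [attractorRight, mapsTo_empty]
  obtain ⟨hc0, hcβ⟩ := attractorLeft_mem_Icc (γ₁ := γ₁) hγ₂
  obtain ⟨hβd, hd1⟩ := attractorRight_mem_Icc (γ₂ := γ₂) hγ₁
  set c := attractorLeft β γ₁ γ₂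
  set d := attractorRight β γ₁ γ₂
  have hT : ∀ x ∈ Ico d 1, T x = x + γ₂ := fun x hx =>
    hT2 x ⟨(by linarith [hγ₁.1] : β ≤ d).trans hx.1, hx.2⟩
  refine eventually_mapsTo_iterate_of_potential Neg.neg (neg_pos.mpr hγ₂0)
    (mapsTo_iff_image_subset.mpr (image_Ico_attractor hγ₁ hγ₂ hT1 hT2).subset)
    (fun x hx => ?_) (fun x hx => ?_) (a := -1) (b := 0) fun x hx => ?_
  · rw [union_comm, Ico_union_Ico_eq_Ico (by linarith [hγ₁.1, hγ₂.2]) hd1, hT x hx]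
    exact ⟨by linarith [hx.1, hγ₁.1], by linarith [hx.2]⟩
  · rw [hT x hx]
    linarith
  · exact ⟨by linarith [hx.2], by linarith [hx.1, hγ₁.1, hγ₂.1]⟩

end TwoIntervals

theorem itm_two_branches_finite_type_general (β γ₁ γ₂ : ℝ) (hβ : β ∈ Set.Ioo (0:ℝ) 1)
    (T : ℝ → ℝ)
    (hT1 : ∀ x ∈ Set.Ico (0:ℝ) β, T x = x + γ₁)
    (hT2 : ∀ x ∈ Set.Ico β (1:ℝ), T x = x + γ₂)
    (hmaps : Set.MapsTo T (Set.Ico (0:ℝ) 1) (Set.Ico 0 1)) :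
    ∃ n : ℕ, T^[n + 1] '' Set.Ico (0:ℝ) 1 = T^[n] '' Set.Ico (0:ℝ) 1 := by
  obtain ⟨hγ₁, hγ₂⟩ := translations_mem_Icc_of_mapsTo hβ hT1 hT2 hmaps
  obtain ⟨hc0, hcβ⟩ := attractorLeft_mem_Icc (γ₁ := γ₁) hγ₂
  obtain ⟨hβd, hd1⟩ := attractorRight_mem_Icc (γ₂ := γ₂) hγ₁
  have hcd : attractorLeft β γ₁ γ₂ ≤ attractorRight β γ₁ γ₂ := by linarith [hγ₁.1, hγ₂.2]
  have hpartition : Ico (0 : ℝ) 1 = Ico 0 (attractorLeft β γ₁ γ₂) ∪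
      Ico (attractorLeft β γ₁ γ₂) (attractorRight β γ₁ γ₂) ∪ Ico (attractorRight β γ₁ γ₂) 1 := by
    rw [Ico_union_Ico_eq_Ico hc0 hcd, Ico_union_Ico_eq_Ico (hc0.trans hcd) hd1]
  have hJ := image_Ico_attractor hγ₁ hγ₂ hT1 hT2
  obtain ⟨N, hN⟩ := ((eventually_mapsTo_iterate_Ico_zero_attractorLeft hγ₁ hγ₂ hT1 hT2).and
    (eventually_mapsTo_iterate_Ico_attractorRight_one hγ₁ hγ₂ hT1 hT2)).exists
  refine ⟨N, iterate_succ_image_eq_of_image_eq hmaps (Ico_subset_Ico hc0 hd1) hJ ?_⟩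
  rw [hpartition, ← mapsTo_iff_image_subset]
  exact (hN.1.union ((mapsTo_iff_image_subset.mpr hJ.subset).iterate N)).union hN.2

/-- Every interval translation map on 2 intervals is of finite type. -/
theorem itm_two_branches_finite_type (β γ₁ γ₂ : ℝ) (hβ : β ∈ Set.Ioo (0:ℝ) 1)
    (h1 : 0 ≤ γ₁) (h2 : γ₂ ≤ 0)
    (T : ℝ → ℝ)
    (hT1 : ∀ x ∈ Set.Ico (0:ℝ) β, T x = x + γ₁)
    (hT2 : ∀ x ∈ Set.Ico β (1:ℝ), T x = x + γ₂)
    (hmaps : Set.MapsTo T (Set.Ico (0:ℝ) 1) (Set.Ico 0 1)) :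
    ∃ n : ℕ, T^[n + 1] '' Set.Ico (0:ℝ) 1 = T^[n] '' Set.Ico (0:ℝ) 1 :=
  itm_two_branches_finite_type_general β γ₁ γ₂ hβ T hT1 hT2 hmaps
end

section
/- Let T : [0,1) → [0,1) be an interval translation map. Then every point x ∈ [0,1) satisfies at least one of the following: the forward orbit of x hits a discontinuity point of T, x is eventually periodic, or the forward orbit of x accumulates on a discontinuity point of T (i.e. there is no δ > 0 such that the forward orbit of x stays at distance at least δ from every discontinuity point). -/
/-- An interval translation map on `r` intervals: a map `T : [0,1) -> [0,1)`
with partition points `0 = beta 0 < ... < beta r = 1` such that on each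
partition interval `[beta i, beta (i+1))` the map `T` is the translation by `gamma i`. -/
structure ITM (r : Nat) where
  T : ℝ → ℝ
  β : Fin (r + 1) → ℝ
  γ : Fin r → ℝ
  beta_mono : StrictMono β
  beta_zero : β 0 = 0
  beta_last : β (Fin.last r) = 1
  branch : ∀ i : Fin r, ∀ x ∈ Set.Ico (β i.castSucc) (β i.succ), T x = x + γ i
  maps_to : Set.MapsTo T (Set.Ico 0 1) (Set.Ico 0 1)

/-- Orbit Classification Lemma: every point either lands on a discontinuity,
is eventually periodic, or its forward orbit accumulates on a discontinuity. -/
theorem itm_orbit_classification (r : ℕ) (M : ITM r) :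
    ∀ x ∈ Set.Ico (0:ℝ) 1,
      (∃ n : ℕ, ∃ i : Fin (r + 1), i ≠ 0 ∧ i ≠ Fin.last r ∧ M.T^[n] x = M.β i) ∨
      (∃ m p : ℕ, 1 ≤ p ∧ M.T^[m + p] x = M.T^[m] x) ∨
      (∃ i : Fin (r + 1), i ≠ 0 ∧ i ≠ Fin.last r ∧
        M.β i ∈ closure (Set.range fun n : ℕ => M.T^[n] x)) := by
  intro x hx
  by_contra hcon
  push_neg at hcon
  obtain ⟨h1, h2, h3⟩ := hcon
  -- orbit stays in [0,1)
  have horb : ∀ n, M.T^[n] x ∈ Set.Ico (0:ℝ) 1 := by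
    intro n
    induction n with
    | zero => simpa using hx
    | succ n ih =>
      rw [Function.iterate_succ_apply']
      exact M.maps_to ih
  -- distance from discontinuities
  have key : ∀ i : Fin (r+1), ∃ e : ℝ, 0 < e ∧
      (i ≠ 0 → i ≠ Fin.last r → ∀ n, e ≤ |M.T^[n] x - M.β i|) := by
    intro i
    by_cases hi0 : i = 0
    · exact ⟨1, one_pos, fun h => absurd hi0 h⟩
    by_cases hil : i = Fin.last r
    · exact ⟨1, one_pos, fun _ h => absurd hil h⟩
    have hnc := h3 i hi0 hil
    rw [Metric.mem_closure_iff] at hnc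
    push_neg at hnc
    obtain ⟨e, he, hfar⟩ := hnc
    refine ⟨e, he, fun _ _ n => ?_⟩
    have := hfar (M.T^[n] x) ⟨n, rfl⟩
    rw [Real.dist_eq, abs_sub_comm] at this
    linarith [this]
  choose e he0 hefar using key
  set δ : ℝ := Finset.univ.inf' Finset.univ_nonempty e with hδdef
  have hδ0 : 0 < δ := by
    rw [hδdef, Finset.lt_inf'_iff]
    exact fun i _ => he0 i
  have hδle : ∀ i, δ ≤ e i := fun i => Finset.inf'_le _ (Finset.mem_univ i)
  have hfar : ∀ (n : ℕ) (i : Fin (r+1)), i ≠ 0 → i ≠ Fin.last r →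
      δ ≤ |M.T^[n] x - M.β i| := fun n i h0 hl =>
    le_trans (hδle i) (hefar i h0 hl n)
  -- branch existence
  have branch_ex : ∀ u ∈ Set.Ico (0:ℝ) 1,
      ∃ i : Fin r, u ∈ Set.Ico (M.β i.castSucc) (M.β i.succ) := by
    intro u hu
    set S : Finset (Fin (r+1)) := Finset.univ.filter (fun j => M.β j ≤ u) with hS
    have hSne : S.Nonempty := ⟨0, by simp [hS, M.beta_zero, hu.1]⟩
    set k := S.max' hSne with hk
    have hkmem : k ∈ S := S.max'_mem hSne
    have hkle : M.β k ≤ u := by simpa [hS] using hkmem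
    have hklast : k ≠ Fin.last r := by
      intro h
      rw [h, M.beta_last] at hkle
      exact absurd hu.2 (not_lt.mpr hkle)
    have hkval : (k : ℕ) < r := by
      have h1' : (k : ℕ) ≠ r := fun h => hklast (Fin.ext (by simpa using h))
      have := k.isLt
      omega
    refine ⟨⟨(k : ℕ), hkval⟩, ?_, ?_⟩
    · have hcs : (⟨(k : ℕ), hkval⟩ : Fin r).castSucc = k := by ext; simp
      rw [hcs]; exact hkle
    · by_contra hcon2
      push_neg at hcon2
      have hmem : (⟨(k : ℕ), hkval⟩ : Fin r).succ ∈ S := by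
        simp only [hS, Finset.mem_filter, Finset.mem_univ, true_and]
        exact hcon2
      have hle := S.le_max' _ hmem
      rw [← hk] at hle
      have : ((⟨(k : ℕ), hkval⟩ : Fin r).succ : ℕ) ≤ (k : ℕ) := hle
      simp at this
  -- translation step lemma
  have step : ∀ u v : ℝ, u ∈ Set.Ico (0:ℝ) 1 → v ∈ Set.Ico (0:ℝ) 1 →
      (∀ i : Fin (r+1), i ≠ 0 → i ≠ Fin.last r → δ ≤ |u - M.β i|) →
      |u - v| < δ → M.T v - M.T u = v - u := by
    intro u v hu hv hufar huv
    obtain ⟨i, hiu⟩ := branch_ex u hu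
    have hiv : v ∈ Set.Ico (M.β i.castSucc) (M.β i.succ) := by
      constructor
      · by_cases h0 : i.castSucc = 0
        · rw [h0, M.beta_zero]; exact hv.1
        · have hlast : i.castSucc ≠ Fin.last r := by
            intro h
            have := congrArg Fin.val h
            simp [Fin.last] at this
            omega
          have := hufar i.castSucc h0 hlast
          by_contra hlt
          push_neg at hlt
          have h1' : δ ≤ u - M.β i.castSucc := by
            rcases abs_cases (u - M.β i.castSucc) with ⟨he, _⟩ | ⟨_, hneg⟩
            · linarith [this, he]
            · linarith [hiu.1]
          rcases abs_lt.mp huv with ⟨hl, hr⟩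
          linarith
      · by_cases hl : i.succ = Fin.last r
        · rw [hl, M.beta_last]; exact hv.2
        · have h0 : i.succ ≠ 0 := by
            intro h
            have := congrArg Fin.val h
            simp at this
          have hfarv := hufar i.succ h0 hl
          by_contra hge
          push_neg at hge
          have h1' : δ ≤ M.β i.succ - u := by
            rcases abs_cases (u - M.β i.succ) with ⟨_, hpos⟩ | ⟨he, _⟩
            · linarith [hiu.2]
            · linarith [hfarv, he]
          rcases abs_lt.mp huv with ⟨hlo, hhi⟩
          linarith
    rw [M.branch i u hiu, M.branch i v hiv]
    ring
  -- pigeonhole: find a < b with close orbit points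
  obtain ⟨N, hN⟩ := exists_nat_gt (1 / δ)
  have hN0 : 0 < N := by
    by_contra h
    push_neg at h
    interval_cases N
    simp at hN
    have : 0 < 1 / δ := by positivity
    linarith
  have hNpos : (0:ℝ) < N := by exact_mod_cast hN0
  have fdef : ∀ n : ℕ, (⌊M.T^[n] x * N⌋).toNat < N := by
    intro n
    have h := horb n
    have h1' : M.T^[n] x * N < N := by
      nlinarith [h.2, hNpos]
    have h2' : (0:ℝ) ≤ M.T^[n] x * N := mul_nonneg h.1 hNpos.le
    have : ⌊M.T^[n] x * N⌋ < (N : ℤ) := by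
      exact Int.floor_lt.mpr (by push_cast; linarith)
    omega
  set f : ℕ → Fin N := fun n => ⟨(⌊M.T^[n] x * N⌋).toNat, fdef n⟩ with hf
  obtain ⟨a0, b0, hab0, hfab⟩ := Finite.exists_ne_map_eq_of_infinite f
  have habs : ∀ a b : ℕ, f a = f b → |M.T^[a] x - M.T^[b] x| < δ := by
    intro a b hfeq
    have hfl : ⌊M.T^[a] x * N⌋ = ⌊M.T^[b] x * N⌋ := by
      have h1' := (horb a).1
      have h2' := (horb b).1
      have ha' : (0:ℝ) ≤ M.T^[a] x * N := mul_nonneg h1' hNpos.le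
      have hb' : (0:ℝ) ≤ M.T^[b] x * N := mul_nonneg h2' hNpos.le
      have ha0 : (0:ℤ) ≤ ⌊M.T^[a] x * N⌋ := Int.floor_nonneg.mpr ha'
      have hb0 : (0:ℤ) ≤ ⌊M.T^[b] x * N⌋ := Int.floor_nonneg.mpr hb'
      have := congrArg Fin.val hfeq
      simp [hf] at this
      omega
    have := Int.abs_sub_lt_one_of_floor_eq_floor hfl
    have heq : M.T^[a] x * N - M.T^[b] x * N = (M.T^[a] x - M.T^[b] x) * N := by ring
    rw [heq, abs_mul, abs_of_pos hNpos] at this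
    have h1' : |M.T^[a] x - M.T^[b] x| < 1 / N := by
      rw [lt_div_iff₀ hNpos]; exact this
    calc |M.T^[a] x - M.T^[b] x| < 1 / N := h1'
      _ < δ := by
        rw [div_lt_iff₀ hNpos, mul_comm]
        rw [div_lt_iff₀ hδ0] at hN
        exact hN
  -- wlog a < b
  obtain ⟨a, b, hab, hclose⟩ : ∃ a b : ℕ, a < b ∧ |M.T^[a] x - M.T^[b] x| < δ := by
    rcases lt_or_gt_of_ne hab0 with h | h
    · exact ⟨a0, b0, h, habs _ _ hfab⟩
    · exact ⟨b0, a0, h, habs _ _ hfab.symm⟩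
  set d : ℝ := M.T^[b] x - M.T^[a] x with hd
  have hdlt : |d| < δ := by rw [hd, abs_sub_comm]; exact hclose
  -- tracking
  have same : ∀ n : ℕ, M.T^[b + n] x - M.T^[a + n] x = d := by
    intro n
    induction n with
    | zero => simp [hd]
    | succ n ih =>
      have hu := horb (a + n)
      have hv := horb (b + n)
      have hstep := step (M.T^[a+n] x) (M.T^[b+n] x) hu hv
        (fun i h0 hl => hfar (a+n) i h0 hl)
        (by rw [show M.T^[a+n] x - M.T^[b+n] x = -(M.T^[b+n] x - M.T^[a+n] x) by ring,
              abs_neg, ih]; exact hdlt)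
      have ea : M.T^[a + (n+1)] x = M.T (M.T^[a+n] x) := by
        rw [show a + (n+1) = (a+n) + 1 by ring, Function.iterate_succ_apply']
      have eb : M.T^[b + (n+1)] x = M.T (M.T^[b+n] x) := by
        rw [show b + (n+1) = (b+n) + 1 by ring, Function.iterate_succ_apply']
      rw [ea, eb]
      linarith [hstep, ih]
  -- d ≠ 0
  have hdne : d ≠ 0 := by
    intro h0
    have hp : 1 ≤ b - a := by omega
    have : M.T^[a + (b - a)] x = M.T^[a] x := by
      have := same 0
      simp at this
      rw [show a + (b - a) = b by omega]
      linarith [this]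
    exact h2 a (b - a) hp this
  -- linear escape
  have lin : ∀ k : ℕ, M.T^[a + k * (b - a)] x = M.T^[a] x + k * d := by
    intro k
    induction k with
    | zero => simp
    | succ k ih =>
      have hba : a + (b - a) = b := Nat.add_sub_cancel' hab.le
      have h1' : a + (k+1) * (b - a) = b + k * (b - a) := by
        calc a + (k+1) * (b - a) = (a + (b - a)) + k * (b - a) := by ring
          _ = b + k * (b - a) := by rw [hba]
      have h2' := same (k * (b - a))
      rw [h1']
      have : M.T^[b + k * (b-a)] x = M.T^[a + k * (b-a)] x + d := by linarith
      rw [this, ih]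
      push_cast
      ring
  obtain ⟨K, hK⟩ := exists_nat_gt (2 / |d|)
  have hdabs : 0 < |d| := abs_pos.mpr hdne
  have hK2 : 2 < (K:ℝ) * |d| := by
    rw [div_lt_iff₀ hdabs] at hK
    linarith
  have h1' := (horb (a + K * (b - a)))
  have h2' := horb a
  rw [lin K] at h1'
  have hb1 : |(K:ℝ) * d| = (K:ℝ) * |d| := by
    rw [abs_mul, abs_of_nonneg (by positivity : (0:ℝ) ≤ (K:ℝ))]
  rcases abs_cases ((K:ℝ) * d) with ⟨he, _⟩ | ⟨he, _⟩ <;>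
    · rw [hb1] at he
      obtain ⟨l1, l2⟩ := h1'
      obtain ⟨l3, l4⟩ := h2'
      linarith
end

section
/- Let T be an interval translation map on [0,1) of finite type, so that X = ⋂ₙ Tⁿ([0,1)) is a finite union of half-open intervals and T restricted to X is a bijection onto X. Let x be a boundary point of a component of X. If no backward iterate of x under (T|_X)^{-1} is a discontinuity point of T, then x is periodic. -/
open Set

/-- Partition lemma: every point of `[0,1)` lies in some branch interval. -/
lemma ITM.exists_branch {r : ℕ} (M : ITM r) {y : ℝ} (hy : y ∈ Ico (0:ℝ) 1) :
    ∃ i : Fin r, y ∈ Ico (M.β i.castSucc) (M.β i.succ) := by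
  classical
  set S : Finset (Fin (r + 1)) := Finset.univ.filter (fun j => M.β j ≤ y) with hS
  have h0 : (0 : Fin (r+1)) ∈ S := by
    simp [hS, M.beta_zero, hy.1]
  have hne : S.Nonempty := ⟨0, h0⟩
  set i := S.max' hne with hi
  have hile : M.β i ≤ y := by
    have := S.max'_mem hne
    simpa [hS] using this
  have hinelast : i ≠ Fin.last r := by
    intro h
    rw [h, M.beta_last] at hile
    exact absurd hy.2 (not_lt.2 hile)
  have hlt : (i : ℕ) < r := by
    rcases lt_or_eq_of_le (Nat.lt_succ_iff.1 i.isLt) with h | h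
    · exact h
    · exact absurd (Fin.ext h : i = Fin.last r) hinelast
  refine ⟨⟨i, hlt⟩, ?_, ?_⟩
  · simpa [Fin.castSucc] using hile
  · by_contra h
    push_neg at h
    have hmem : (Fin.succ ⟨(i:ℕ), hlt⟩ : Fin (r+1)) ∈ S := by
      simp only [hS, Finset.mem_filter, Finset.mem_univ, true_and]
      exact h
    have := S.le_max' _ hmem
    rw [← hi] at this
    have h2 : (i : ℕ) + 1 ≤ (i : ℕ) := this
    omega

lemma ITM.image_eq {r : ℕ} (M : ITM r) {A : Set ℝ} (hA : A ⊆ Ico (0:ℝ) 1) :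
    M.T '' A = ⋃ i : Fin r, (· + M.γ i) '' (A ∩ Ico (M.β i.castSucc) (M.β i.succ)) := by
  ext z
  constructor
  · rintro ⟨a, ha, rfl⟩
    obtain ⟨i, hi⟩ := M.exists_branch (hA ha)
    exact mem_iUnion.2 ⟨i, ⟨a, ⟨ha, hi⟩, (M.branch i a hi).symm⟩⟩
  · intro hz
    obtain ⟨i, a, ⟨ha, hai⟩, rfl⟩ := mem_iUnion.1 hz
    exact ⟨a, ha, M.branch i a hai⟩

lemma frontier_iUnion_subset {ι : Type*} [Finite ι] (S : ι → Set ℝ) :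
    frontier (⋃ i, S i) ⊆ ⋃ i, frontier (S i) := by
  intro x hx
  have hcl : x ∈ ⋃ i, closure (S i) := by
    rw [← closure_iUnion_of_finite]; exact hx.1
  obtain ⟨i, hi⟩ := mem_iUnion.1 hcl
  by_cases hint : x ∈ interior (S i)
  · exact absurd (interior_mono (subset_iUnion S i) hint) hx.2
  · exact mem_iUnion.2 ⟨i, hi, hint⟩

lemma frontier_Ico_finite (a b : ℝ) : (frontier (Ico a b)).Finite := by
  rcases lt_or_ge a b with h | h
  · rw [frontier_Ico h]; exact (finite_singleton a).insert b |>.subset (by simp [pair_comm])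
  · rw [Ico_eq_empty (not_lt.2 h)]; simp

lemma ITM.frontier_image_finite {r : ℕ} (M : ITM r) {A : Set ℝ} (hA : A ⊆ Ico (0:ℝ) 1)
    (hfA : (frontier A).Finite) : (frontier (M.T '' A)).Finite := by
  rw [M.image_eq hA]
  apply Set.Finite.subset _ (frontier_iUnion_subset _)
  apply Set.finite_iUnion
  intro i
  have hco : (fun x : ℝ => x + M.γ i) = ⇑(Homeomorph.addRight (M.γ i)) := rfl
  rw [hco, ← Homeomorph.image_frontier (Homeomorph.addRight (M.γ i))]
  apply Set.Finite.image
  apply Set.Finite.subset (hfA.union (frontier_Ico_finite (M.β i.castSucc) (M.β i.succ)))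
  intro z hz
  rcases frontier_inter_subset A _ hz with h | h
  · exact Or.inl h.1
  · exact Or.inr h.2

lemma ITM.frontier_iterate_finite {r : ℕ} (M : ITM r) (n : ℕ) :
    (frontier (M.T^[n] '' Ico (0:ℝ) 1)).Finite := by
  induction n with
  | zero => simpa using frontier_Ico_finite (0:ℝ) 1
  | succ n ih =>
      have hsub : M.T^[n] '' Ico (0:ℝ) 1 ⊆ Ico (0:ℝ) 1 :=
        (M.maps_to.iterate n).image_subset
      have := M.frontier_image_finite hsub ih
      rwa [← Set.image_comp, ← Function.iterate_succ'] at this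

/-- For a finite type interval translation map, a boundary point of a component
of the attractor `X` none of whose backward iterates is a discontinuity must be
periodic. Here `g` is the inverse of the bijection `T` restricted to `X`. -/
theorem itm_boundary_point_periodic (r N : ℕ) (M : ITM r)
    (hfin : M.T^[N + 1] '' Set.Ico (0:ℝ) 1 = M.T^[N] '' Set.Ico (0:ℝ) 1)
    (X : Set ℝ) (hX : X = M.T^[N] '' Set.Ico (0:ℝ) 1)
    (hTX : Set.MapsTo M.T X X)
    (g : ℝ → ℝ) (hgX : Set.MapsTo g X X)
    (hTg : ∀ y ∈ X, M.T (g y) = y) (hgT : ∀ y ∈ X, g (M.T y) = y)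
    (x : ℝ) (hx : x ∈ X) (hxb : x ∈ frontier X)
    (hnodisc : ∀ n : ℕ, ∀ i : Fin (r + 1), i ≠ 0 → i ≠ Fin.last r →
      g^[n] x ≠ M.β i) :
    ∃ p : ℕ, 1 ≤ p ∧ M.T^[p] x = x := by
  classical
  have hXsub : X ⊆ Ico (0:ℝ) 1 := by
    rw [hX]; exact (M.maps_to.iterate N).image_subset
  have hfr : (frontier X).Finite := by rw [hX]; exact M.frontier_iterate_finite N
  -- all backward iterates lie in X
  have hgmem : ∀ n : ℕ, g^[n] x ∈ X := fun n => hgX.iterate n hx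
  -- all backward iterates lie in the frontier
  have hfront : ∀ n : ℕ, g^[n] x ∈ frontier X := by
    intro n
    induction n with
    | zero => simpa using hxb
    | succ n ih =>
        by_contra hni
        set y := g^[n+1] x with hy
        have hyX : y ∈ X := hgmem (n+1)
        have hyint : y ∈ interior X := by
          rcases (subset_closure hyX : y ∈ closure X) with h
          by_contra h2
          exact hni ⟨h, h2⟩
        have hyIoo : y ∈ Ioo (0:ℝ) 1 := by
          have : interior X ⊆ interior (Ico (0:ℝ) 1) := interior_mono hXsub
          simpa using this hyint
        -- y is not a partition point
        have hynb : ∀ i : Fin (r+1), y ≠ M.β i := by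
          intro i
          by_cases h0 : i = 0
          · subst h0; rw [M.beta_zero]; exact ne_of_gt hyIoo.1
          · by_cases hl : i = Fin.last r
            · subst hl; rw [M.beta_last]; exact ne_of_lt hyIoo.2
            · exact hnodisc (n+1) i h0 hl
        obtain ⟨i, hi⟩ := M.exists_branch (hXsub hyX)
        have hyIoo2 : y ∈ Ioo (M.β i.castSucc) (M.β i.succ) :=
          ⟨lt_of_le_of_ne hi.1 (Ne.symm (hynb i.castSucc)), hi.2⟩
        -- T is translation on open nbhd U of y
        set U := interior X ∩ Ioo (M.β i.castSucc) (M.β i.succ) with hU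
        have hUopen : IsOpen U := isOpen_interior.inter isOpen_Ioo
        have hyU : y ∈ U := ⟨hyint, hyIoo2⟩
        have hTU : (· + M.γ i) '' U ⊆ X := by
          rintro _ ⟨u, hu, rfl⟩
          have huX : u ∈ X := interior_subset hu.1
          have huIco : u ∈ Ico (M.β i.castSucc) (M.β i.succ) := ⟨le_of_lt hu.2.1, hu.2.2⟩
          show u + M.γ i ∈ X
          rw [← M.branch i u huIco]
          exact hTX huX
        have hTyU : M.T y ∈ (· + M.γ i) '' U := by
          refine ⟨y, hyU, ?_⟩
          exact (M.branch i y hi).symm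
        have hopen : IsOpen ((· + M.γ i) '' U) := isOpenMap_add_right (M.γ i) U hUopen
        have hTyint : M.T y ∈ interior X :=
          interior_maximal hTU hopen hTyU
        have hTy : M.T y = g^[n] x := by
          have : g^[n+1] x = g (g^[n] x) := Function.iterate_succ_apply' g n x
          rw [hy, this]
          exact hTg _ (hgmem n)
        rw [hTy] at hTyint
        exact ih.2 hTyint
  -- T^[k] inverts g^[k] on X
  have hTgk : ∀ k : ℕ, ∀ z ∈ X, M.T^[k] (g^[k] z) = z := by
    intro k
    induction k with
    | zero => intro z _; simp
    | succ k ih =>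
        intro z hz
        rw [Function.iterate_succ_apply' g, Function.iterate_succ_apply M.T,
          hTg _ (hgX.iterate k hz)]
        exact ih z hz
  -- pigeonhole
  haveI : Finite ↥(frontier X) := hfr.to_subtype
  obtain ⟨m, n, hmn, heq⟩ := Finite.exists_ne_map_eq_of_infinite
    (fun k : ℕ => (⟨g^[k] x, hfront k⟩ : ↥(frontier X)))
  have heq' : g^[m] x = g^[n] x := congrArg Subtype.val heq
  have main : ∀ m n : ℕ, m < n → g^[m] x = g^[n] x → ∃ p : ℕ, 1 ≤ p ∧ M.T^[p] x = x := by
    intro m n hlt he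
    set p := n - m with hp
    have hp1 : 1 ≤ p := by omega
    have hn : n = p + m := by omega
    set w := g^[m] x with hw
    have hwX : w ∈ X := hgmem m
    have hgpw : g^[p] w = w := by
      rw [hw, ← Function.iterate_add_apply g p m x, ← hn, ← he]
    have hTpw : M.T^[p] w = w := by
      conv_lhs => rw [← hgpw]
      exact hTgk p w hwX
    have hxw : x = M.T^[m] w := (hTgk m x hx).symm
    refine ⟨p, hp1, ?_⟩
    rw [hxw, ← Function.iterate_add_apply M.T p m w, add_comm p m,
      Function.iterate_add_apply M.T m p w, hTpw]
  rcases hmn.lt_or_gt with hlt | hlt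
  · exact main m n hlt heq'
  · exact main n m hlt heq'.symm
end

section
/- Let T be an interval translation map on [0,1). Then closure(X) ⊆ NW(T), where X = ⋂ₙ Tⁿ([0,1)) and NW(T) is the non-wandering set: specifically, if J ⊆ X is a half-open interval of positive length with int(J) ⊆ X, then every point of J is non-wandering, because there exist n > m ≥ 0 with T^m(J) ∩ Tⁿ(J) containing an interval of positive length. -/
open Set MeasureTheory

/-! ### Finite unions of half-open intervals -/

/-- A set is a finite union of half-open intervals `Ico`. -/
def IsFU (S : Set ℝ) : Prop := ∃ F : Finset (ℝ × ℝ), S = ⋃ p ∈ F, Set.Ico p.1 p.2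

lemma isFU_Ico (a b : ℝ) : IsFU (Set.Ico a b) := ⟨{(a, b)}, by simp⟩

lemma IsFU.iUnion {ι : Type} [Fintype ι] {S : ι → Set ℝ} (h : ∀ i, IsFU (S i)) :
    IsFU (⋃ i, S i) := by
  choose F hF using h
  refine ⟨Finset.univ.biUnion F, ?_⟩
  rw [Finset.set_biUnion_biUnion]
  ext x
  simp [hF]

lemma IsFU.inter_Ico {S : Set ℝ} (hS : IsFU S) (u v : ℝ) : IsFU (S ∩ Set.Ico u v) := by
  obtain ⟨F, rfl⟩ := hS
  refine ⟨F.image (fun p => (p.1 ⊔ u, p.2 ⊓ v)), ?_⟩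
  rw [Finset.set_biUnion_finset_image, Set.iUnion₂_inter]
  exact Set.iUnion₂_congr fun p _ => Set.Ico_inter_Ico

lemma IsFU.image_add {S : Set ℝ} (hS : IsFU S) (γ : ℝ) :
    IsFU ((fun x => x + γ) '' S) := by
  obtain ⟨F, rfl⟩ := hS
  refine ⟨F.image (fun p => (p.1 + γ, p.2 + γ)), ?_⟩
  rw [Finset.set_biUnion_finset_image, Set.image_iUnion₂]
  exact Set.iUnion₂_congr fun p _ => Set.image_add_const_Ico _ _ _

lemma IsFU.preimage_add {S : Set ℝ} (hS : IsFU S) (γ : ℝ) :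
    IsFU ((fun x => x + γ) ⁻¹' S) := by
  obtain ⟨F, rfl⟩ := hS
  refine ⟨F.image (fun p => (p.1 - γ, p.2 - γ)), ?_⟩
  rw [Finset.set_biUnion_finset_image, Set.preimage_iUnion₂]
  exact Set.iUnion₂_congr fun p _ => Set.preimage_add_const_Ico _ _ _

lemma IsFU.measurableSet {S : Set ℝ} (hS : IsFU S) : MeasurableSet S := by
  obtain ⟨F, rfl⟩ := hS
  exact F.measurableSet_biUnion fun p _ => measurableSet_Ico

lemma IsFU.exists_Ico_subset {S : Set ℝ} (hS : IsFU S) (h : S.Nonempty) :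
    ∃ c d : ℝ, c < d ∧ Set.Ico c d ⊆ S := by
  obtain ⟨F, rfl⟩ := hS
  obtain ⟨x, hx⟩ := h
  simp only [Set.mem_iUnion] at hx
  obtain ⟨p, hp, hxp⟩ := hx
  exact ⟨p.1, p.2, lt_of_le_of_lt hxp.1 hxp.2, fun z hz => Set.mem_biUnion hp hz⟩

lemma volume_image_add (γ : ℝ) (S : Set ℝ) :
    volume ((fun x => x + γ) '' S) = volume S := by
  have h : (fun x => x + γ) '' S = (fun x => x + (-γ)) ⁻¹' S := by
    ext y
    constructor
    · rintro ⟨x, hx, rfl⟩; simpa using hx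
    · intro hy; exact ⟨y + (-γ), hy, by ring⟩
  rw [h, measure_preimage_add_right]

/-! ### Basic facts about ITMs -/

namespace ITM

variable {r : ℕ} (M : ITM r)

/-- The `i`-th branch interval. -/
def B (i : Fin r) : Set ℝ := Set.Ico (M.β i.castSucc) (M.β i.succ)

lemma exists_branch_s14 {x : ℝ} (hx : x ∈ Set.Ico (0 : ℝ) 1) : ∃ i : Fin r, x ∈ M.B i := by
  by_contra h
  push_neg at h
  have key : ∀ i : Fin (r + 1), M.β i ≤ x := by
    intro i
    induction i using Fin.induction with
    | zero => rw [M.beta_zero]; exact hx.1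
    | succ i ih =>
      by_contra hlt
      push_neg at hlt
      exact h i (Set.mem_Ico.mpr ⟨ih, hlt⟩)
  have h1 := key (Fin.last r)
  rw [M.beta_last] at h1
  exact absurd hx.2 (not_lt.mpr h1)

lemma B_subset (i : Fin r) : M.B i ⊆ Set.Ico (0 : ℝ) 1 := by
  intro x hx
  refine ⟨le_trans ?_ hx.1, lt_of_lt_of_le hx.2 ?_⟩
  · rw [← M.beta_zero]; exact M.beta_mono.monotone (Fin.zero_le _)
  · rw [← M.beta_last]; exact M.beta_mono.monotone (Fin.le_last _)

lemma B_disjoint {i j : Fin r} (hij : i ≠ j) : Disjoint (M.B i) (M.B j) := by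
  have key : ∀ i j : Fin r, i < j → Disjoint (M.B i) (M.B j) := by
    intro i j h
    rw [B, B, Set.Ico_disjoint_Ico]
    have hle : i.succ ≤ j.castSucc := by
      rw [Fin.le_def]
      simpa using h
    calc min (M.β i.succ) (M.β j.succ) ≤ M.β i.succ := min_le_left _ _
      _ ≤ M.β j.castSucc := M.beta_mono.monotone hle
      _ ≤ max (M.β i.castSucc) (M.β j.castSucc) := le_max_right _ _
  rcases hij.lt_or_gt with h | h
  · exact key i j h
  · exact (key j i h).symm

lemma image_T_eq {A : Set ℝ} (hA : A ⊆ Set.Ico 0 1) :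
    M.T '' A = ⋃ i : Fin r, (fun x => x + M.γ i) '' (A ∩ M.B i) := by
  ext y
  simp only [Set.mem_image, Set.mem_iUnion]
  constructor
  · rintro ⟨x, hxA, rfl⟩
    obtain ⟨i, hi⟩ := M.exists_branch_s14 (hA hxA)
    exact ⟨i, x, ⟨hxA, hi⟩, (M.branch i x hi).symm⟩
  · rintro ⟨i, x, ⟨hxA, hi⟩, rfl⟩
    exact ⟨x, hxA, M.branch i x hi⟩

lemma image_T {A : Set ℝ} (hA : A ⊆ Set.Ico 0 1) (hFU : IsFU A) :
    IsFU (M.T '' A) ∧ M.T '' A ⊆ Set.Ico 0 1 ∧ volume (M.T '' A) ≤ volume A := by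
  refine ⟨?_, ?_, ?_⟩
  · rw [M.image_T_eq hA]
    exact IsFU.iUnion fun i => (hFU.inter_Ico _ _).image_add _
  · rintro y ⟨x, hx, rfl⟩
    exact M.maps_to (hA hx)
  · calc volume (M.T '' A)
        ≤ ∑' i : Fin r, volume ((fun x => x + M.γ i) '' (A ∩ M.B i)) := by
          rw [M.image_T_eq hA]; exact measure_iUnion_le _
      _ = ∑' i : Fin r, volume (A ∩ M.B i) := by
          exact tsum_congr fun i => volume_image_add _ _
      _ = volume (⋃ i : Fin r, A ∩ M.B i) := by
          refine (measure_iUnion ?_ ?_).symm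
          · intro i j hij
            exact Set.disjoint_of_subset Set.inter_subset_right Set.inter_subset_right
              (M.B_disjoint hij)
          · exact fun i => (hFU.inter_Ico _ _).measurableSet
      _ ≤ volume A := measure_mono (Set.iUnion_subset fun i => Set.inter_subset_left)

lemma image_iter {A : Set ℝ} (hA : A ⊆ Set.Ico 0 1) (hFU : IsFU A) (n : ℕ) :
    IsFU (M.T^[n] '' A) ∧ M.T^[n] '' A ⊆ Set.Ico 0 1 ∧ volume (M.T^[n] '' A) ≤ volume A := by
  induction n with
  | zero => simpa using ⟨hFU, hA⟩
  | succ n ih =>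
    obtain ⟨h1, h2, h3⟩ := ih
    rw [Function.iterate_succ', Set.image_comp]
    obtain ⟨g1, g2, g3⟩ := M.image_T h2 h1
    exact ⟨g1, g2, le_trans g3 h3⟩

end ITM

/-- The set of points of `[0,1)` whose `n`-th iterate lies in `J`, built inductively
so that it is manifestly a finite union of intervals. -/
def ITM.preSet {r : ℕ} (M : ITM r) (J : Set ℝ) : ℕ → Set ℝ
  | 0 => J
  | n + 1 => ⋃ i : Fin r, ((fun x => x + M.γ i) ⁻¹' M.preSet J n) ∩ M.B i

namespace ITM

variable {r : ℕ} (M : ITM r)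

lemma preSet_isFU {J : Set ℝ} (hJ : IsFU J) (n : ℕ) : IsFU (M.preSet J n) := by
  induction n with
  | zero => exact hJ
  | succ n ih => exact IsFU.iUnion fun i => (ih.preimage_add _).inter_Ico _ _

lemma preSet_subset {J : Set ℝ} (hJ : J ⊆ Set.Ico 0 1) (n : ℕ) :
    M.preSet J n ⊆ Set.Ico (0 : ℝ) 1 := by
  cases n with
  | zero => exact hJ
  | succ n =>
    exact Set.iUnion_subset fun i => (Set.inter_subset_right).trans (M.B_subset i)

lemma mem_preSet {J : Set ℝ} (hJ : J ⊆ Set.Ico 0 1) (n : ℕ) (x : ℝ) :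
    x ∈ M.preSet J n ↔ x ∈ Set.Ico (0 : ℝ) 1 ∧ M.T^[n] x ∈ J := by
  induction n generalizing x with
  | zero => exact ⟨fun h => ⟨hJ h, h⟩, fun h => h.2⟩
  | succ n ih =>
    constructor
    · intro hx
      simp only [preSet, Set.mem_iUnion] at hx
      obtain ⟨i, hpre, hBi⟩ := hx
      have hTx : M.T x = x + M.γ i := M.branch i x hBi
      have hx01 : x ∈ Set.Ico (0 : ℝ) 1 := M.B_subset i hBi
      have h2 := (ih (M.T x)).mp (by rw [hTx]; exact hpre)
      exact ⟨hx01, by rw [Function.iterate_succ_apply]; exact h2.2⟩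
    · rintro ⟨hx01, hTn⟩
      obtain ⟨i, hBi⟩ := M.exists_branch_s14 hx01
      have hTx : M.T x = x + M.γ i := M.branch i x hBi
      have hTx01 : M.T x ∈ Set.Ico (0 : ℝ) 1 := M.maps_to hx01
      have hmem : M.T x ∈ M.preSet J n :=
        (ih (M.T x)).mpr ⟨hTx01, by rw [← Function.iterate_succ_apply]; exact hTn⟩
      have hmem' : x + M.γ i ∈ M.preSet J n := by rw [← hTx]; exact hmem
      simp only [preSet, Set.mem_iUnion]
      exact ⟨i, hmem', hBi⟩

end ITM

/-- Main lemma: an interval of positive length inside the attractor overlaps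
one of its own forward images in an interval of positive length. -/
lemma itm_main {r : ℕ} (M : ITM r) (a b : ℝ) (hab : a < b)
    (hJ : Set.Ico a b ⊆ ⋂ n : ℕ, M.T^[n] '' Set.Ico (0 : ℝ) 1) :
    ∃ k : ℕ, 1 ≤ k ∧ ∃ c d : ℝ, c < d ∧
      Set.Ico c d ⊆ Set.Ico a b ∩ (M.T^[k] '' Set.Ico a b) := by
  set J : Set ℝ := Set.Ico a b with hJdef
  have hJ01 : J ⊆ Set.Ico (0 : ℝ) 1 := by
    intro x hx
    have := hJ hx
    rw [Set.mem_iInter] at this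
    simpa using this 0
  have hJFU : IsFU J := isFU_Ico a b
  have hba : (0 : ℝ) < b - a := sub_pos.mpr hab
  -- each preSet has measure at least b - a
  have hvol : ∀ n : ℕ, ENNReal.ofReal (b - a) ≤ volume (M.preSet J n) := by
    intro n
    have himg : J ⊆ M.T^[n] '' M.preSet J n := by
      intro y hy
      have hy' := hJ hy
      rw [Set.mem_iInter] at hy'
      obtain ⟨x, hx01, rfl⟩ := hy' n
      exact ⟨x, (M.mem_preSet hJ01 n x).mpr ⟨hx01, hy⟩, rfl⟩
    calc ENNReal.ofReal (b - a) = volume J := (Real.volume_Ico).symm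
      _ ≤ volume (M.T^[n] '' M.preSet J n) := measure_mono himg
      _ ≤ volume (M.preSet J n) :=
          (M.image_iter (M.preSet_subset hJ01 n) (M.preSet_isFU hJFU n) n).2.2
  -- choose N with 1 < N * (b - a)
  obtain ⟨N, hN⟩ := exists_nat_gt (1 / (b - a))
  have h1 : (1 : ℝ) < N * (b - a) := (div_lt_iff₀ hba).mp hN
  -- pigeonhole over the restricted measure on [0,1)
  have hpigeon : ∃ m ∈ Finset.range (N + 1), ∃ n ∈ Finset.range (N + 1), ∃ _ : m ≠ n,
      (M.preSet J m ∩ M.preSet J n).Nonempty := by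
    refine exists_nonempty_inter_of_measure_univ_lt_sum_measure
      (volume.restrict (Set.Ico (0 : ℝ) 1))
      (fun n _ => (M.preSet_isFU hJFU n).measurableSet.nullMeasurableSet) ?_
    have hres : ∀ n : ℕ, (volume.restrict (Set.Ico (0 : ℝ) 1)) (M.preSet J n)
        = volume (M.preSet J n) := by
      intro n
      rw [Measure.restrict_apply (M.preSet_isFU hJFU n).measurableSet,
        Set.inter_eq_self_of_subset_left (M.preSet_subset hJ01 n)]
    have huniv : (volume.restrict (Set.Ico (0 : ℝ) 1)) Set.univ = 1 := by
      rw [Measure.restrict_apply MeasurableSet.univ, Set.univ_inter, Real.volume_Ico]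
      norm_num
    rw [huniv]
    calc (1 : ENNReal) < ENNReal.ofReal ((N + 1) * (b - a)) := by
          rw [show (1 : ENNReal) = ENNReal.ofReal 1 by simp]
          refine (ENNReal.ofReal_lt_ofReal_iff (by positivity)).mpr ?_
          nlinarith
      _ = ((N + 1 : ℕ) : ENNReal) * ENNReal.ofReal (b - a) := by
          rw [ENNReal.ofReal_mul (by positivity)]
          congr 1
          rw [show ((N : ℝ) + 1) = ((N + 1 : ℕ) : ℝ) by push_cast; ring,
            ENNReal.ofReal_natCast]
      _ = ∑ n ∈ Finset.range (N + 1), ENNReal.ofReal (b - a) := by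
          rw [Finset.sum_const, Finset.card_range, nsmul_eq_mul]
      _ ≤ ∑ n ∈ Finset.range (N + 1),
            (volume.restrict (Set.Ico (0 : ℝ) 1)) (M.preSet J n) := by
          refine Finset.sum_le_sum fun n _ => ?_
          rw [hres n]
          exact hvol n
  obtain ⟨m, -, n, -, hmn, x, hxm, hxn⟩ := hpigeon
  -- reduce to the case m < n
  have key : ∀ m n : ℕ, m < n → ∀ x : ℝ, x ∈ M.preSet J m → x ∈ M.preSet J n →
      ∃ k : ℕ, 1 ≤ k ∧ ∃ c d : ℝ, c < d ∧
        Set.Ico c d ⊆ Set.Ico a b ∩ (M.T^[k] '' Set.Ico a b) := by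
    intro m n hlt x hxm hxn
    obtain ⟨-, hm⟩ := (M.mem_preSet hJ01 m x).mp hxm
    obtain ⟨-, hn⟩ := (M.mem_preSet hJ01 n x).mp hxn
    set k := n - m with hk
    have hk1 : 1 ≤ k := by omega
    have hiter : M.T^[k] (M.T^[m] x) = M.T^[n] x := by
      rw [← Function.iterate_add_apply, Nat.sub_add_cancel (le_of_lt hlt)]
    have hpunk : M.T^[n] x ∈ J ∩ (M.T^[k] '' J) := ⟨hn, ⟨M.T^[m] x, hm, hiter⟩⟩
    obtain ⟨hFUim, -, -⟩ := M.image_iter hJ01 hJFU k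
    have hFUD : IsFU ((M.T^[k] '' J) ∩ Set.Ico a b) := hFUim.inter_Ico a b
    obtain ⟨c, d, hcd, hsub⟩ := hFUD.exists_Ico_subset
      ⟨M.T^[n] x, by rw [Set.inter_comm]; exact hpunk⟩
    exact ⟨k, hk1, c, d, hcd, hsub.trans (by rw [Set.inter_comm])⟩
  rcases hmn.lt_or_gt with hlt | hlt
  · exact key m n hlt x hxm hxn
  · exact key n m hlt x hxn hxm

/-- An interval of positive length contained in the attractor consists of
non-wandering points: two forward images of it overlap in an interval of
positive length, and every point of it is non-wandering. -/
theorem itm_interval_in_X_nonwandering (r : ℕ) (M : ITM r) (a b : ℝ) (hab : a < b)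
    (hJ : Set.Ico a b ⊆ ⋂ n : ℕ, M.T^[n] '' Set.Ico (0:ℝ) 1) :
    (∃ m n : ℕ, m < n ∧ ∃ c d : ℝ, c < d ∧
      Set.Ico c d ⊆ (M.T^[m] '' Set.Ico a b) ∩ (M.T^[n] '' Set.Ico a b)) ∧
    ∀ x ∈ Set.Ico a b, ∀ U : Set ℝ, IsOpen U → x ∈ U →
      ∃ n : ℕ, 1 ≤ n ∧ ((M.T^[n] '' (U ∩ Set.Ico 0 1)) ∩ U).Nonempty := by
  have hJ01 : Set.Ico a b ⊆ Set.Ico (0 : ℝ) 1 := by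
    intro x hx
    have := hJ hx
    rw [Set.mem_iInter] at this
    simpa using this 0
  constructor
  · obtain ⟨k, hk1, c, d, hcd, hsub⟩ := itm_main M a b hab hJ
    refine ⟨0, k, hk1, c, d, hcd, ?_⟩
    simpa using hsub
  · intro x hx U hU hxU
    obtain ⟨ε, hε, hball⟩ := Metric.isOpen_iff.mp hU x hxU
    set b' := min b (x + ε) with hb'
    have hxb' : x < b' := lt_min hx.2 (by linarith)
    have hsubU : Set.Ico x b' ⊆ U := by
      intro y hy
      apply hball
      rw [Metric.mem_ball, Real.dist_eq, abs_lt]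
      constructor
      · linarith [hy.1]
      · have := hy.2
        have : y < x + ε := lt_of_lt_of_le this (min_le_right _ _)
        linarith
    have hsubJ : Set.Ico x b' ⊆ Set.Ico a b :=
      Set.Ico_subset_Ico hx.1 (min_le_left _ _)
    obtain ⟨k, hk1, c, d, hcd, hsub⟩ := itm_main M x b' hxb' (hsubJ.trans hJ)
    refine ⟨k, hk1, c, ?_, ?_⟩
    · have hc := hsub (Set.mem_Ico.mpr ⟨le_refl c, hcd⟩)
      obtain ⟨y, hy, hyc⟩ := hc.2
      exact ⟨y, ⟨hsubU hy, hJ01 (hsubJ hy)⟩, hyc⟩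
    · exact hsubU (hsub (Set.mem_Ico.mpr ⟨le_refl c, hcd⟩)).1
end

section
/- Let T be an interval translation map on [0,1) such that every discontinuity point β of T has the property that both one-sided orbits of β are eventually periodic (T is eventually periodic). Then T is of finite type: there exists n with Tⁿ⁺¹([0,1)) = Tⁿ([0,1)). -/
open Set Filter Topology Function

theorem Ico_subset_iUnion_Ico_fin {X : Type*} [LinearOrder X] {n : ℕ} (a : Fin (n + 1) → X) :
    Ico (a 0) (a (Fin.last n)) ⊆ ⋃ i : Fin n, Ico (a i.castSucc) (a i.succ) := by
  induction n with
  | zero => simp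
  | succ n ih =>
    intro x hx
    rcases lt_or_ge x (a (Fin.last n).castSucc) with hlt | hge
    · obtain ⟨i, hi⟩ := mem_iUnion.1 (ih (a ∘ Fin.castSucc) ⟨hx.1, hlt⟩)
      exact mem_iUnion.2 ⟨i.castSucc, by rw [Fin.succ_castSucc]; exact hi⟩
    · exact mem_iUnion.2 ⟨Fin.last n, hge, by simpa using hx.2⟩

theorem finite_setOf_exists_of_periodic {α : Type*} {Q : ℕ → α → Prop} {m p : ℕ} (hp : 0 < p)
    (hQ : ∀ k, {b | Q k b}.Finite) (hper : ∀ k b, Q (k + (m + p)) b → Q (k + m) b) :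
    {b | ∃ k, Q k b}.Finite := by
  have reduce : ∀ k b, Q k b → ∃ k' < m + p, Q k' b := by
    intro k
    induction k using Nat.strong_induction_on with
    | _ k ih =>
      intro b hb
      rcases lt_or_ge k (m + p) with hk | hk
      · exact ⟨k, hk, hb⟩
      · obtain ⟨j, rfl⟩ := Nat.exists_eq_add_of_le' hk
        exact ih (j + m) (by omega) b (hper j b hb)
  refine ((finite_Iio (m + p)).biUnion fun k _ => hQ k).subset ?_
  rintro b ⟨k, hb⟩
  obtain ⟨k', hk', hb'⟩ := reduce k b hb
  exact mem_biUnion hk' hb'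

theorem exists_succ_eq_of_antitone_of_finite_range {α : Type*} [PartialOrder α] {u : ℕ → α}
    (hu : Antitone u) (hfin : (range u).Finite) : ∃ n, u (n + 1) = u n := by
  obtain ⟨a, b, hab, he⟩ := hfin.exists_lt_map_eq_of_forall_mem (f := u) mem_range_self
  exact ⟨a, le_antisymm (hu a.le_succ) (he ▸ hu hab)⟩

def IsUnionIco {α : Type*} [Preorder α] (A B S : Set α) : Prop :=
  ∀ x ∈ S, ∃ a ∈ A, ∃ b ∈ B, x ∈ Ico a b ∧ Ico a b ⊆ S

theorem finite_setOf_isUnionIco {α : Type*} [Preorder α] {A B : Set α} (hA : A.Finite)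
    (hB : B.Finite) : {S | IsUnionIco A B S}.Finite := by
  refine ((hA.prod hB).finite_subsets.image fun P => ⋃ p ∈ P, Ico p.1 p.2).subset ?_
  intro S hS
  refine ⟨{p ∈ A ×ˢ B | Ico p.1 p.2 ⊆ S}, sep_subset _ _, ?_⟩
  apply Subset.antisymm
  · exact iUnion₂_subset fun p hp => hp.2
  · intro x hx
    obtain ⟨a, ha, b, hb, hx, hab⟩ := hS x hx
    exact mem_biUnion (x := (a, b)) ⟨⟨ha, hb⟩, hab⟩ hx

namespace ITM

variable {r : ℕ} (M : ITM r)

/-- `b = T^k(β_i⁻)`; as `T^k` is a translation on a left neighbourhood of `β i`, this is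
expressed by naming that translation. -/
def IsLeftLimitIterate (i : Fin (r + 1)) (k : ℕ) (b : ℝ) : Prop :=
  ∀ᶠ y in 𝓝[<] M.β i, M.T^[k] y = y + (b - M.β i)

def rightOrbits : Set ℝ := {a | ∃ i ≠ Fin.last r, ∃ k, M.T^[k] (M.β i) = a}

def leftOrbits : Set ℝ := {b | ∃ i ≠ 0, ∃ k, M.IsLeftLimitIterate i k b}

variable {M}

theorem IsLeftLimitIterate.unique {i : Fin (r + 1)} {k : ℕ} {b b' : ℝ}
    (h : M.IsLeftLimitIterate i k b) (h' : M.IsLeftLimitIterate i k b') : b = b' := by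
  obtain ⟨y, hy, hy'⟩ := (h.and h').exists
  linarith

theorem beta_mem_rightOrbits {i : Fin (r + 1)} (hi : i ≠ Fin.last r) : M.β i ∈ M.rightOrbits :=
  ⟨i, hi, 0, rfl⟩

theorem beta_mem_leftOrbits {i : Fin (r + 1)} (hi : i ≠ 0) : M.β i ∈ M.leftOrbits :=
  ⟨i, hi, 0, Eventually.of_forall fun y => by simp⟩

theorem apply_mem_rightOrbits {a : ℝ} (ha : a ∈ M.rightOrbits) : M.T a ∈ M.rightOrbits := by
  obtain ⟨i, hi, k, rfl⟩ := ha
  exact ⟨i, hi, k + 1, iterate_succ_apply' _ _ _⟩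

theorem add_gamma_mem_leftOrbits {b μ : ℝ} {i : Fin r} (hb : b ∈ M.leftOrbits) (hμ : 0 < μ)
    (hsub : Ioo (b - μ) b ⊆ Ico (M.β i.castSucc) (M.β i.succ)) :
    b + M.γ i ∈ M.leftOrbits := by
  obtain ⟨j, hj, k, hk⟩ := hb
  refine ⟨j, hj, k + 1, ?_⟩
  filter_upwards [hk, Ioo_mem_nhdsLT (sub_lt_self (M.β j) hμ)] with y hy hyμ
  have hTy : M.T^[k] y ∈ Ioo (b - μ) b := by
    rw [hy]
    constructor <;> linarith [hyμ.1, hyμ.2]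
  rw [iterate_succ_apply', M.branch i _ (hsub hTy), hy]
  ring

theorem image_Ico_of_subset_branch {a b : ℝ} {i : Fin r}
    (h : Ico a b ⊆ Ico (M.β i.castSucc) (M.β i.succ)) :
    M.T '' Ico a b = Ico (a + M.γ i) (b + M.γ i) := by
  rw [image_congr fun x hx => M.branch i x (h hx), image_add_const_Ico]

theorem exists_mem_branch {x : ℝ} (hx : x ∈ Ico (0 : ℝ) 1) :
    ∃ i : Fin r, x ∈ Ico (M.β i.castSucc) (M.β i.succ) := by
  rw [← M.beta_zero, ← M.beta_last] at hx
  exact mem_iUnion.1 (Ico_subset_iUnion_Ico_fin M.β hx)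

theorem finite_rightOrbits
    (hplus : ∀ i : Fin (r + 1), i ≠ Fin.last r →
      ∃ m p : ℕ, 1 ≤ p ∧ M.T^[m + p] (M.β i) = M.T^[m] (M.β i)) :
    M.rightOrbits.Finite := by
  have horbits : M.rightOrbits =
      ⋃ i ∈ {i | i ≠ Fin.last r}, {a | ∃ k, M.T^[k] (M.β i) = a} := by
    ext; simp [rightOrbits]
  rw [horbits]
  refine (toFinite _).biUnion fun i hi => ?_
  obtain ⟨m, p, hp, hper⟩ := hplus i hi
  refine finite_setOf_exists_of_periodic (m := m) hp (fun k => (finite_singleton (M.T^[k] (M.β i))).subset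
    fun a ha => ha.symm) fun k a ha => ?_
  rwa [iterate_add_apply, hper, ← iterate_add_apply] at ha

theorem finite_leftOrbits
    (hminus : ∀ i : Fin (r + 1), i ≠ 0 →
      ∃ m p : ℕ, 1 ≤ p ∧ ∃ ε > 0, ∀ y ∈ Ioo (M.β i - ε) (M.β i),
        M.T^[m + p] y = M.T^[m] y) :
    M.leftOrbits.Finite := by
  have horbits : M.leftOrbits =
      ⋃ i ∈ {i | i ≠ 0}, {b | ∃ k, M.IsLeftLimitIterate i k b} := by
    ext; simp [leftOrbits]
  rw [horbits]
  refine (toFinite _).biUnion fun i hi => ?_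
  obtain ⟨m, p, hp, ε, hε, hper⟩ := hminus i hi
  have hper' : ∀ᶠ y in 𝓝[<] M.β i, M.T^[m + p] y = M.T^[m] y :=
    eventually_of_mem (Ioo_mem_nhdsLT (sub_lt_self _ hε)) hper
  refine finite_setOf_exists_of_periodic (m := m) hp
    (fun k => Subsingleton.finite fun b hb b' hb' => IsLeftLimitIterate.unique hb hb')
    fun k b hb => ?_
  filter_upwards [hb, hper'] with y hy hy'
  rwa [iterate_add_apply, ← hy', ← iterate_add_apply]

theorem isUnionIco_image {S : Set ℝ} (hS : IsUnionIco M.rightOrbits M.leftOrbits S)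
    (hS01 : S ⊆ Ico 0 1) : IsUnionIco M.rightOrbits M.leftOrbits (M.T '' S) := by
  rintro _ ⟨y, hyS, rfl⟩
  obtain ⟨a, ha, b, hb, hy, hab⟩ := hS y hyS
  obtain ⟨i, hi⟩ := M.exists_mem_branch (hS01 hyS)
  -- cut `[a, b)` down to the branch of `y`; the new endpoints are old ones or partition points
  have ha' : max a (M.β i.castSucc) ∈ M.rightOrbits := by
    rcases max_choice a (M.β i.castSucc) with h | h <;> rw [h]
    exacts [ha, beta_mem_rightOrbits (Fin.castSucc_ne_last i)]
  have hb' : min b (M.β i.succ) ∈ M.leftOrbits := by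
    rcases min_choice b (M.β i.succ) with h | h <;> rw [h]
    exacts [hb, beta_mem_leftOrbits (Fin.succ_ne_zero i)]
  set a' := max a (M.β i.castSucc)
  set b' := min b (M.β i.succ)
  have hy' : y ∈ Ico a' b' := ⟨max_le hy.1 hi.1, lt_min hy.2 hi.2⟩
  have hbranch : Ico a' b' ⊆ Ico (M.β i.castSucc) (M.β i.succ) :=
    Ico_subset_Ico (le_max_right _ _) (min_le_right _ _)
  have hTa' : M.T a' = a' + M.γ i := M.branch i a' (hbranch ⟨le_rfl, hy'.1.trans_lt hy'.2⟩)
  refine ⟨a' + M.γ i, hTa' ▸ apply_mem_rightOrbits ha', b' + M.γ i,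
    add_gamma_mem_leftOrbits hb' (sub_pos.2 (hy'.1.trans_lt hy'.2)) ?_, ?_, ?_⟩
  · rw [sub_sub_cancel]
    exact Ioo_subset_Ico_self.trans hbranch
  · rw [← image_Ico_of_subset_branch hbranch]
    exact mem_image_of_mem _ hy'
  · rw [← image_Ico_of_subset_branch hbranch]
    exact image_mono ((Ico_subset_Ico (le_max_left _ _) (min_le_left _ _)).trans hab)

theorem isUnionIco_Ico : IsUnionIco M.rightOrbits M.leftOrbits (Ico 0 1) := by
  have hne : (0 : Fin (r + 1)) ≠ Fin.last r := fun h => by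
    simpa [h, M.beta_last] using M.beta_zero
  intro x hx
  refine ⟨M.β 0, beta_mem_rightOrbits hne, M.β (Fin.last r), beta_mem_leftOrbits hne.symm, ?_⟩
  rw [M.beta_zero, M.beta_last]
  exact ⟨hx, subset_rfl⟩

theorem iterate_image_subset (n : ℕ) : M.T^[n] '' Ico 0 1 ⊆ Ico 0 1 :=
  (M.maps_to.iterate n).image_subset

theorem antitone_iterate_image : Antitone fun n => M.T^[n] '' Ico (0 : ℝ) 1 := by
  refine antitone_nat_of_succ_le fun n => ?_
  rw [iterate_succ, image_comp]
  exact image_mono M.maps_to.image_subset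

theorem isUnionIco_iterate_image (n : ℕ) :
    IsUnionIco M.rightOrbits M.leftOrbits (M.T^[n] '' Ico 0 1) := by
  induction n with
  | zero => simpa using isUnionIco_Ico
  | succ n ih =>
    rw [iterate_succ', image_comp]
    exact isUnionIco_image ih (iterate_image_subset n)

end ITM

/-- If both one-sided orbits of every partition point are eventually periodic
(the map is eventually periodic), then the interval translation map is of finite
type. Right germs at a point coincide with the orbit of the point itself; left
germs are expressed via a left neighbourhood. -/
theorem itm_eventually_periodic_finite_type (r : ℕ) (M : ITM r)
    (hplus : ∀ i : Fin (r + 1), i ≠ Fin.last r →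
      ∃ m p : ℕ, 1 ≤ p ∧ M.T^[m + p] (M.β i) = M.T^[m] (M.β i))
    (hminus : ∀ i : Fin (r + 1), i ≠ 0 →
      ∃ m p : ℕ, 1 ≤ p ∧ ∃ ε > 0, ∀ y ∈ Set.Ioo (M.β i - ε) (M.β i),
        M.T^[m + p] y = M.T^[m] y) :
    ∃ n : ℕ, M.T^[n + 1] '' Set.Ico (0:ℝ) 1 = M.T^[n] '' Set.Ico (0:ℝ) 1 :=
  exists_succ_eq_of_antitone_of_finite_range M.antitone_iterate_image
    ((finite_setOf_isUnionIco (M.finite_rightOrbits hplus) (M.finite_leftOrbits hminus)).subset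
      (range_subset_iff.2 M.isUnionIco_iterate_image))
end

section
/- Let T be an interval translation map of finite type, so X = ⋂ₙ Tⁿ([0,1)) is a finite union of half-open intervals and T|_X is a bijection of X. Let J be a component interval of X and R_J the first return map to J. Then J is partitioned into finitely many maximal half-open subintervals J₁, ..., J_N such that R_J is a translation on each Jᵢ, and the images R_J(J₁), ..., R_J(J_N) are pairwise disjoint subsets of J with union equal to J. -/
open Set Function Filter Topology MeasureTheory
open scoped ENNReal

section Dynamics

variable {α : Type*} {T : α → α} {X J : Set α}

def NoReturnBefore (T : α → α) (J : Set α) (x : α) (n : ℕ) : Prop :=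
  ∀ m, 1 ≤ m → m < n → T^[m] x ∉ J

theorem NoReturnBefore.mono {x : α} {m n : ℕ} (h : NoReturnBefore T J x n) (hmn : m ≤ n) :
    NoReturnBefore T J x m :=
  fun k hk hkm => h k hk (hkm.trans_le hmn)

variable (hinj : InjOn T X) (hmaps : MapsTo T X X)
include hinj hmaps

theorem eq_iterate_sub_of_iterate_eq {u v : α} (hu : u ∈ X) (hv : v ∈ X) {k l : ℕ} (hkl : k ≤ l)
    (h : T^[k] u = T^[l] v) : u = T^[l - k] v := by
  rw [← Nat.add_sub_cancel' hkl, iterate_add_apply] at h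
  exact hinj.iterate hmaps k hu (hmaps.iterate _ hv) h

theorem eq_of_iterate_eq_of_noReturnBefore (hJ : J ⊆ X) {x y : α} (hx : x ∈ J) (hy : y ∈ J)
    {k l : ℕ} (hk : 1 ≤ k) (hkl : k ≤ l) (h : T^[k] x = T^[l] y)
    (hret : NoReturnBefore T J y l) : x = y := by
  have hxy := eq_iterate_sub_of_iterate_eq hinj hmaps (hJ hx) (hJ hy) hkl h
  rcases hkl.eq_or_lt with rfl | hlt
  · simpa using hxy
  · exact absurd (hxy ▸ hx) (hret _ (by omega) (by omega))

theorem finite_setOf_iterate_mem_of_noReturnBefore (hJ : J ⊆ X) {D : Set α} (hD : D.Finite) :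
    {x ∈ J | ∃ k, 1 ≤ k ∧ T^[k] x ∈ D ∧ NoReturnBefore T J x k}.Finite := by
  choose k hk using
    fun x : {x ∈ J | ∃ k, 1 ≤ k ∧ T^[k] x ∈ D ∧ NoReturnBefore T J x k} => x.2.2
  have := hD.to_subtype
  refine Set.finite_coe_iff.1 (Finite.of_injective (fun x => (⟨T^[k x] x, (hk x).2.1⟩ : D)) ?_)
  intro x y hxy
  wlog hle : k x ≤ k y generalizing x y
  · exact (this hxy.symm (le_of_not_ge hle)).symm
  exact Subtype.ext (eq_of_iterate_eq_of_noReturnBefore hinj hmaps hJ x.2.1 y.2.1 (hk x).1 hle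
    (congrArg Subtype.val hxy) (hk y).2.2)

theorem pairwise_disjoint_image_iterate (hJ : J ⊆ X) {I : Set α} (hI : I ⊆ J)
    (h : ∀ k, 1 ≤ k → Disjoint (T^[k] '' I) J) : Pairwise (Disjoint on fun k => T^[k] '' I) := by
  refine (pairwise_disjoint_on _).2 fun j k hjk => disjoint_left.2 ?_
  rintro _ ⟨u, hu, rfl⟩ ⟨v, hv, hvu⟩
  have huv := eq_iterate_sub_of_iterate_eq hinj hmaps (hJ (hI hu)) (hJ (hI hv)) hjk.le hvu.symm
  exact disjoint_left.1 (h (k - j) (by omega)) ⟨v, hv, huv.symm⟩ (hI hu)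

theorem disjoint_image_iterate_of_noReturnBefore (hJ : J ⊆ X) {P Q : Set α} (hP : P ⊆ J)
    (hQ : Q ⊆ J) (hPQ : Disjoint P Q) {k l : ℕ} (hk : 1 ≤ k) (hl : 1 ≤ l)
    (hPk : ∀ x ∈ P, NoReturnBefore T J x k) (hQl : ∀ y ∈ Q, NoReturnBefore T J y l) :
    Disjoint (T^[k] '' P) (T^[l] '' Q) := by
  wlog hkl : k ≤ l generalizing P Q k l
  · exact (this hQ hP hPQ.symm hl hk hQl hPk (le_of_not_ge hkl)).symm
  refine disjoint_left.2 ?_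
  rintro _ ⟨x, hx, rfl⟩ ⟨y, hy, hyx⟩
  have := eq_of_iterate_eq_of_noReturnBefore hinj hmaps hJ (hP hx) (hQ hy) hk hkl hyx.symm
    (hQl y hy)
  exact disjoint_left.1 hPQ hx (this ▸ hy)

end Dynamics

theorem Fin.sum_univ_succ_sub_castSucc {G : Type*} [AddCommGroup G] :
    ∀ {n : ℕ} (f : Fin (n + 1) → G), ∑ i : Fin n, (f i.succ - f i.castSucc) = f (last n) - f 0
  | 0, f => by simp
  | n + 1, f => by
    have ih := sum_univ_succ_sub_castSucc (f ∘ castSucc)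
    simp only [comp_apply, castSucc_zero] at ih
    rw [Fin.sum_univ_castSucc]
    simp only [succ_castSucc]
    rw [ih, succ_last]
    abel

theorem Set.Finite.exists_subdivision_Ico {α : Type*} [LinearOrder α] {s : Set α} {a b : α}
    (hs : s.Finite) (hsub : s ⊆ Ico a b) (hab : a < b) :
    ∃ (K : ℕ) (c : Fin (K + 1) → α), 1 ≤ K ∧ StrictMono c ∧ c 0 = a ∧ c (Fin.last K) = b ∧
      ∀ k : Fin K, ∀ w ∈ Ioo (c k.castSucc) (c k.succ), w ∉ s := by
  classical
  set E := insert a (insert b hs.toFinset)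
  have haE : a ∈ E := Finset.mem_insert_self _ _
  have hbE : b ∈ E := Finset.mem_insert_of_mem (Finset.mem_insert_self _ _)
  have hE : ∀ e ∈ E, a ≤ e ∧ e ≤ b := by
    simp only [E, Finset.mem_insert, Set.Finite.mem_toFinset]
    rintro e (rfl | rfl | he)
    exacts [⟨le_rfl, hab.le⟩, ⟨hab.le, le_rfl⟩, ⟨(hsub he).1, (hsub he).2.le⟩]
  have hK : 1 < E.card := Finset.one_lt_card.2 ⟨a, haE, b, hbE, hab.ne⟩
  have hcard : E.card = E.card - 1 + 1 := by omega
  set c := E.orderEmbOfFin hcard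
  have hrange : ∀ e ∈ E, ∃ i, c i = e := fun e he => by
    rw [← Set.mem_range, E.range_orderEmbOfFin hcard]
    exact he
  obtain ⟨i, hi⟩ := hrange a haE
  obtain ⟨j, hj⟩ := hrange b hbE
  refine ⟨E.card - 1, c, by omega, c.strictMono, ?_, ?_, ?_⟩
  · exact le_antisymm (hi ▸ c.monotone (Fin.zero_le i)) (hE _ (E.orderEmbOfFin_mem hcard 0)).1
  · exact le_antisymm (hE _ (E.orderEmbOfFin_mem hcard _)).2 (hj ▸ c.monotone (Fin.le_last j))
  · intro k w ⟨hkw, hwk⟩ hw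
    obtain ⟨l, rfl⟩ := hrange w (by simp [E, hw])
    have h1 := Fin.lt_def.1 (c.lt_iff_lt.1 hkw)
    have h2 := Fin.lt_def.1 (c.lt_iff_lt.1 hwk)
    simp only [Fin.val_castSucc, Fin.val_succ] at h1 h2
    omega

theorem Monotone.pairwise_disjoint_on_Ico_castSucc_succ {α : Type*} [LinearOrder α] {K : ℕ}
    {c : Fin (K + 1) → α} (hc : Monotone c) :
    Pairwise (Disjoint on fun k : Fin K => Ico (c k.castSucc) (c k.succ)) :=
  (pairwise_disjoint_on _).2 fun _ _ hkl => disjoint_left.2 fun _ hx hx' =>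
    (lt_of_lt_of_le hx.2 (hc (Fin.succ_le_castSucc_iff.2 hkl))).not_ge hx'.1

theorem Ico_disjoint_Ico_of_notMem {α : Type*} [LinearOrder α] {a b p q : α}
    (hp : p ∉ Ico a b) (ha : a ∉ Ioo p q) : Disjoint (Ico p q) (Ico a b) := by
  refine disjoint_left.2 fun x hx hx' => hp ⟨?_, lt_of_le_of_lt hx.1 hx'.2⟩
  by_contra! hpa
  exact ha ⟨hpa, lt_of_le_of_lt hx'.1 hx.2⟩

theorem Ico_subset_Ico_of_mem {α : Type*} [LinearOrder α] {a b p q : α}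
    (hp : p ∈ Ico a b) (hb : b ∉ Ioo p q) : Ico p q ⊆ Ico a b := by
  refine fun x hx => ⟨hp.1.trans hx.1, ?_⟩
  by_contra! hbx
  exact hb ⟨hp.2, lt_of_le_of_lt hbx hx.2⟩

theorem not_pairwise_disjoint_Ico_of_volume_ne_top {S : Set ℝ} (hS : volume S ≠ ∞) {ℓ : ℝ}
    (hℓ : 0 < ℓ) (p : ℕ → ℝ) (hp : ∀ k, Ico (p k) (p k + ℓ) ⊆ S) :
    ¬ Pairwise (Disjoint on fun k => Ico (p k) (p k + ℓ)) := by
  intro hdisj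
  refine hS (top_le_iff.1 ?_)
  calc ∞ = ∑' k, volume (Ico (p k) (p k + ℓ)) := by simp [Real.volume_Ico, hℓ]
    _ = volume (⋃ k, Ico (p k) (p k + ℓ)) := (measure_iUnion hdisj fun _ => measurableSet_Ico).symm
    _ ≤ volume S := measure_mono (iUnion_subset hp)

theorem iUnion_Ico_eq_Ico_of_volume_le {ι : Type*} [Finite ι] {l u : ι → ℝ} {a b : ℝ}
    (hsub : ⋃ i, Ico (l i) (u i) ⊆ Ico a b)
    (hvol : volume (Ico a b) ≤ volume (⋃ i, Ico (l i) (u i))) :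
    ⋃ i, Ico (l i) (u i) = Ico a b := by
  set U := ⋃ i, Ico (l i) (u i)
  refine hsub.antisymm fun p hp => by_contra fun hpU => ?_
  have hcompl : Uᶜ ∈ 𝓝[≥] p := by
    rw [compl_iUnion, iInter_mem]
    intro i
    rcases not_and_or.1 fun hi => hpU (mem_iUnion_of_mem i hi) with hpl | hup
    · exact mem_nhdsWithin_of_mem_nhds (mem_of_superset (Iio_mem_nhds (not_le.1 hpl))
        fun x hx hx' => (not_le.2 hx) hx'.1)
    · exact mem_of_superset self_mem_nhdsWithin fun x hx hx' => hup (lt_of_le_of_lt hx hx'.2)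
  obtain ⟨q, hpq, hq⟩ := mem_nhdsGE_iff_exists_Ico_subset.1
    (inter_mem (Ico_mem_nhdsGE_of_mem hp) hcompl)
  have hnull : volume (Ico a b \ U) = 0 := by
    rw [measure_sdiff hsub (MeasurableSet.iUnion fun _ => measurableSet_Ico).nullMeasurableSet
      (measure_mono hsub |>.trans_lt measure_Ico_lt_top).ne, tsub_eq_zero_of_le hvol]
  have hpos : 0 < volume (Ico p q) := by simpa [Real.volume_Ico] using hpq
  exact hpos.ne' (measure_mono_null hq hnull)

theorem iUnion_Ico_add_eq_Ico {K : ℕ} {c : Fin (K + 1) → ℝ} (hc : Monotone c) (t : Fin K → ℝ)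
    (hdisj : Pairwise (Disjoint on fun k => Ico (c k.castSucc + t k) (c k.succ + t k)))
    (hsub : ∀ k, Ico (c k.castSucc + t k) (c k.succ + t k) ⊆ Ico (c 0) (c (Fin.last K))) :
    ⋃ k, Ico (c k.castSucc + t k) (c k.succ + t k) = Ico (c 0) (c (Fin.last K)) := by
  refine iUnion_Ico_eq_Ico_of_volume_le (iUnion_subset hsub) (le_of_eq ?_)
  rw [measure_iUnion hdisj fun _ => measurableSet_Ico, tsum_fintype]
  simp only [Real.volume_Ico, add_sub_add_right_eq_sub]
  rw [← ENNReal.ofReal_sum_of_nonneg fun k _ => sub_nonneg.2 (hc (Fin.castSucc_le_succ k)),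
    Fin.sum_univ_succ_sub_castSucc]

namespace ITM

variable {r : ℕ} (M : ITM r)

theorem exists_mem_Ico_beta {y : ℝ} (hy : y ∈ Ico 0 1) :
    ∃ i : Fin r, y ∈ Ico (M.β i.castSucc) (M.β i.succ) := by
  classical
  have hex : ∃ j, y < M.β j := ⟨Fin.last r, M.beta_last ▸ hy.2⟩
  have hj0 : Fin.find _ hex ≠ 0 := fun h =>
    (h ▸ Fin.find_spec hex).not_ge (M.beta_zero ▸ hy.1)
  obtain ⟨i, hi⟩ := Fin.exists_succ_eq.2 hj0
  exact ⟨i, not_lt.1 (Fin.find_min hex (hi ▸ Fin.castSucc_lt_succ)), hi ▸ Fin.find_spec hex⟩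

theorem eqOn_add_of_forall_beta_notMem {y y' : ℝ} (hy : y ∈ Ico 0 1)
    (hβ : ∀ i, M.β i ∉ Ioo y y') : EqOn M.T (· + (M.T y - y)) (Ico y y') := by
  obtain ⟨i, hi⟩ := M.exists_mem_Ico_beta hy
  intro w hw
  have hwi : w ∈ Ico (M.β i.castSucc) (M.β i.succ) :=
    ⟨hi.1.trans hw.1, not_le.1 fun h => hβ i.succ ⟨hi.2, lt_of_le_of_lt h hw.2⟩⟩
  simp only [M.branch i w hwi, M.branch i y hi]
  ring

def breakpoints (a b : ℝ) : Set ℝ := insert a (insert b (range M.β))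

theorem finite_breakpoints (a b : ℝ) : (M.breakpoints a b).Finite :=
  ((finite_range M.β).insert b).insert a

def cutPoints (a b : ℝ) : Set ℝ :=
  {z ∈ Ico a b | ∃ k, M.T^[k] z ∈ M.breakpoints a b ∧ NoReturnBefore M.T (Ico a b) z k}

theorem finite_cutPoints {X : Set ℝ} (hinj : InjOn M.T X) (hmaps : MapsTo M.T X X) {a b : ℝ}
    (hJ : Ico a b ⊆ X) : (M.cutPoints a b).Finite := by
  refine ((M.finite_breakpoints a b).union (finite_setOf_iterate_mem_of_noReturnBefore
    hinj hmaps hJ (M.finite_breakpoints a b))).subset ?_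
  rintro z ⟨hz, (_ | k), hk, hret⟩
  · exact Or.inl hk
  · exact Or.inr ⟨hz, k + 1, by omega, hk, hret⟩

variable {a b z z' : ℝ}

theorem notMem_Ioo_of_eqOn_iterate (hz : a ≤ z) (hz' : z' ≤ b)
    (hgap : ∀ w ∈ Ioo z z', w ∉ M.cutPoints a b) {k : ℕ} {t : ℝ}
    (htr : EqOn (M.T^[k]) (· + t) (Ico z z'))
    (hret : ∀ w ∈ Ico z z', NoReturnBefore M.T (Ico a b) w k) {d : ℝ}
    (hd : d ∈ M.breakpoints a b) : d ∉ Ioo (z + t) (z' + t) := by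
  rintro ⟨h1, h2⟩
  have hw : d - t ∈ Ico z z' := ⟨by linarith, by linarith⟩
  refine hgap (d - t) ⟨by linarith, by linarith⟩
    ⟨⟨hz.trans hw.1, by linarith [hw.2]⟩, k, ?_, hret _ hw⟩
  simpa [htr hw] using hd

theorem eqOn_iterate_of_noReturnBefore (hJ01 : Ico a b ⊆ Ico 0 1) (hz : z ∈ Ico a b)
    (hz' : z' ≤ b) (hgap : ∀ w ∈ Ioo z z', w ∉ M.cutPoints a b) {n : ℕ}
    (hn : NoReturnBefore M.T (Ico a b) z n) :
    EqOn (M.T^[n]) (· + (M.T^[n] z - z)) (Ico z z') ∧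
      ∀ w ∈ Ico z z', NoReturnBefore M.T (Ico a b) w n := by
  induction n with
  | zero => exact ⟨fun w _ => by simp, fun w _ m _ hm => absurd hm (Nat.not_lt_zero m)⟩
  | succ n ih =>
    obtain ⟨htr, hret⟩ := ih (hn.mono n.le_succ)
    have hD : ∀ d ∈ M.breakpoints a b, d ∉ Ioo (M.T^[n] z) (z' + (M.T^[n] z - z)) :=
      fun d hd => by
        simpa only [add_sub_cancel] using M.notMem_Ioo_of_eqOn_iterate hz.1 hz' hgap htr hret hd
    have himg : ∀ w ∈ Ico z z', M.T^[n] w ∈ Ico (M.T^[n] z) (z' + (M.T^[n] z - z)) :=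
      fun w hw => by rw [htr hw]; exact ⟨by linarith [hw.1], by linarith [hw.2]⟩
    refine ⟨fun w hw => ?_, fun w hw m hm hmn => ?_⟩
    · have hstep := M.eqOn_add_of_forall_beta_notMem (M.maps_to.iterate n (hJ01 hz))
        fun i => hD _ (mem_insert_of_mem _ (mem_insert_of_mem _ (mem_range_self i)))
      rw [iterate_succ_apply', iterate_succ_apply', hstep (himg w hw), htr hw]
      ring
    · rcases (Nat.lt_succ_iff.1 hmn).lt_or_eq with hmn | rfl
      · exact hret w hw m hm hmn
      · exact disjoint_left.1 (Ico_disjoint_Ico_of_notMem (hn m hm m.lt_succ_self)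
          (hD a (mem_insert a _))) (himg w hw)

variable {X : Set ℝ} (hinj : InjOn M.T X) (hmaps : MapsTo M.T X X) (hJ : Ico a b ⊆ X)
  (hJ01 : Ico a b ⊆ Ico 0 1) (hz : z ∈ Ico a b) (hz' : z' ≤ b)
  (hgap : ∀ w ∈ Ioo z z', w ∉ M.cutPoints a b)
include hinj hmaps hJ hJ01 hz hz' hgap

theorem exists_return (hzz' : z < z') : ∃ n, 1 ≤ n ∧ M.T^[n] z ∈ Ico a b := by
  by_contra! hnone
  have htr (k : ℕ) := M.eqOn_iterate_of_noReturnBefore hJ01 hz hz' hgap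
    (n := k) fun m hm _ => hnone m hm
  have himg (k : ℕ) : M.T^[k] '' Ico z z' = Ico (M.T^[k] z) (M.T^[k] z + (z' - z)) := by
    rw [(htr k).1.image_eq, image_add_const_Ico]
    congr 1 <;> ring
  have hI : Ico z z' ⊆ Ico a b := Ico_subset_Ico hz.1 hz'
  have hdisj := pairwise_disjoint_image_iterate hinj hmaps hJ hI fun k hk =>
    disjoint_left.2 fun _ ⟨w, hw, hwk⟩ => hwk ▸ (htr (k + 1)).2 w hw k hk k.lt_succ_self
  simp only [himg] at hdisj
  refine not_pairwise_disjoint_Ico_of_volume_ne_top (S := Ico 0 1) measure_Ico_lt_top.ne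
    (sub_pos.2 hzz') (fun k => M.T^[k] z) (fun k => ?_) hdisj
  rw [← himg]
  exact image_subset_iff.2 fun w hw => M.maps_to.iterate k (hJ01 (hI hw))

theorem exists_firstReturn_translation (hzz' : z < z') :
    ∃ n, 1 ≤ n ∧ ∃ t, ∀ x ∈ Ico z z',
      M.T^[n] x = x + t ∧ M.T^[n] x ∈ Ico a b ∧ NoReturnBefore M.T (Ico a b) x n := by
  classical
  have hex := M.exists_return hinj hmaps hJ hJ01 hz hz' hgap hzz'
  obtain ⟨hn1, hnJ⟩ := Nat.find_spec hex
  obtain ⟨htr, hret⟩ := M.eqOn_iterate_of_noReturnBefore hJ01 hz hz' hgap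
    fun m hm hmn hmJ => Nat.find_min hex hmn ⟨hm, hmJ⟩
  have hb := M.notMem_Ioo_of_eqOn_iterate hz.1 hz' hgap htr hret
    (mem_insert_of_mem _ (mem_insert b _))
  rw [add_sub_cancel] at hb
  refine ⟨_, hn1, _, fun x hx => ⟨htr hx, Ico_subset_Ico_of_mem hnJ hb ?_, hret x hx⟩⟩
  rw [htr hx]
  exact ⟨by linarith [hx.1], by linarith [hx.2]⟩

end ITM

theorem itm_return_map_structure_general (r N : ℕ) (M : ITM r)
    (X : Set ℝ) (hX : X = M.T^[N] '' Set.Ico (0:ℝ) 1)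
    (hbij : Set.BijOn M.T X X)
    (a b : ℝ) (hab : a < b) (hJ : Set.Ico a b ⊆ X) :
    ∃ (K : ℕ) (c : Fin (K + 1) → ℝ) (nret : Fin K → ℕ),
      1 ≤ K ∧ StrictMono c ∧ c 0 = a ∧ c (Fin.last K) = b ∧
      (∀ k : Fin K,
        1 ≤ nret k ∧
        ∃ t : ℝ, ∀ x ∈ Set.Ico (c k.castSucc) (c k.succ),
          M.T^[nret k] x = x + t ∧ M.T^[nret k] x ∈ Set.Ico a b ∧
          ∀ m, 1 ≤ m → m < nret k → M.T^[m] x ∉ Set.Ico a b) ∧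
      (∀ k l : Fin K, k ≠ l →
        Disjoint (M.T^[nret k] '' Set.Ico (c k.castSucc) (c k.succ))
          (M.T^[nret l] '' Set.Ico (c l.castSucc) (c l.succ))) ∧
      (⋃ k : Fin K, M.T^[nret k] '' Set.Ico (c k.castSucc) (c k.succ)) = Set.Ico a b := by
  have hJ01 : Ico a b ⊆ Ico 0 1 := hJ.trans (hX ▸ (M.maps_to.iterate N).image_subset)
  obtain ⟨K, c, hK, hc, rfl, rfl, hgap⟩ :=
    (M.finite_cutPoints hbij.injOn hbij.mapsTo hJ).exists_subdivision_Ico (sep_subset _ _) hab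
  have hpiece (k : Fin K) : Ico (c k.castSucc) (c k.succ) ⊆ Ico (c 0) (c (Fin.last K)) :=
    Ico_subset_Ico (hc.monotone (Fin.zero_le _)) (hc.monotone (Fin.le_last _))
  choose nret hn t ht using fun k : Fin K =>
    M.exists_firstReturn_translation hbij.injOn hbij.mapsTo hJ hJ01
      (hpiece k ⟨le_rfl, hc Fin.castSucc_lt_succ⟩) (hc.monotone (Fin.le_last _)) (hgap k)
      (hc Fin.castSucc_lt_succ)
  have himg (k : Fin K) : M.T^[nret k] '' Ico (c k.castSucc) (c k.succ) =
      Ico (c k.castSucc + t k) (c k.succ + t k) := by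
    rw [EqOn.image_eq fun x hx => (ht k x hx).1, image_add_const_Ico]
  have hdisj : Pairwise (Disjoint on fun k => M.T^[nret k] '' Ico (c k.castSucc) (c k.succ)) :=
    fun k l hkl => disjoint_image_iterate_of_noReturnBefore hbij.injOn hbij.mapsTo hJ (hpiece k)
      (hpiece l) (hc.monotone.pairwise_disjoint_on_Ico_castSucc_succ hkl) (hn k) (hn l)
      (fun x hx => (ht k x hx).2.2) (fun x hx => (ht l x hx).2.2)
  refine ⟨K, c, nret, hK, hc, rfl, rfl, fun k => ⟨hn k, t k, ht k⟩, hdisj, ?_⟩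
  simp only [himg] at hdisj ⊢
  exact iUnion_Ico_add_eq_Ico hc.monotone t hdisj fun k => himg k ▸
    image_subset_iff.2 fun x hx => (ht k x hx).2.1

/-- Structure of the first return map on a component `[a,b)` of the attractor of
a finite type interval translation map: the component is partitioned into
finitely many half-open subintervals on each of which the first return map is a
translation, and the return images are pairwise disjoint with union the whole
component. -/
theorem itm_return_map_structure (r N : ℕ) (M : ITM r)
    (hfin : M.T^[N + 1] '' Set.Ico (0:ℝ) 1 = M.T^[N] '' Set.Ico (0:ℝ) 1)
    (X : Set ℝ) (hX : X = M.T^[N] '' Set.Ico (0:ℝ) 1)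
    (hbij : Set.BijOn M.T X X)
    (a b : ℝ) (hab : a < b) (hJ : Set.Ico a b ⊆ X)
    (hcomp : ∀ ε > (0:ℝ), ¬ Set.Ico (a - ε) b ⊆ X ∧ ¬ Set.Ico a (b + ε) ⊆ X) :
    ∃ (K : ℕ) (c : Fin (K + 1) → ℝ) (nret : Fin K → ℕ),
      1 ≤ K ∧ StrictMono c ∧ c 0 = a ∧ c (Fin.last K) = b ∧
      (∀ k : Fin K,
        1 ≤ nret k ∧
        ∃ t : ℝ, ∀ x ∈ Set.Ico (c k.castSucc) (c k.succ),
          M.T^[nret k] x = x + t ∧ M.T^[nret k] x ∈ Set.Ico a b ∧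
          ∀ m, 1 ≤ m → m < nret k → M.T^[m] x ∉ Set.Ico a b) ∧
      (∀ k l : Fin K, k ≠ l →
        Disjoint (M.T^[nret k] '' Set.Ico (c k.castSucc) (c k.succ))
          (M.T^[nret l] '' Set.Ico (c l.castSucc) (c l.succ))) ∧
      (⋃ k : Fin K, M.T^[nret k] '' Set.Ico (c k.castSucc) (c k.succ)) = Set.Ico a b :=
  itm_return_map_structure_general r N M X hX hbij a b hab hJ
end
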